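/- arXiv:2402.04645 — 6 statements merged into one kernel-verified Lean document; each statement's English description precedes it below -/
import Mathlib

section
/- In any many-to-one matching instance with responsive preferences, for any firm f and any two stable matchings μ and μ', the number of workers matched to f is the same: |μ(f)| = |μ'(f)|. Moreover, if |μ(f)| < c_f for some stable matching μ, then μ(f) = μ'(f) for every stable matching μ'. -/
/-- A many-to-one matching instance: firms `F` with capacities, workers `W`,
strict preferences of workers over `Option F` (`none` = unmatched), strict
preferences of firms over individual workers (`Option W`, `none` = keeping a
seat empty) together with a responsive extension to sets of workers. -/
structure MTO (F W : Type) [DecidableEq W] where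
  cap : F → ℕ
  /-- `wlt w a b` : worker `w` strictly prefers `a` to `b`. -/
  wlt : W → Option F → Option F → Prop
  wlt_trans : ∀ w a b c, wlt w a b → wlt w b c → wlt w a c
  wlt_irrefl : ∀ w a, ¬ wlt w a a
  wlt_trichot : ∀ w a b, a = b ∨ wlt w a b ∨ wlt w b a
  /-- `flt1 f a b` : firm `f` strictly prefers (single) worker option `a` to `b`. -/
  flt1 : F → Option W → Option W → Prop
  flt1_trans : ∀ f a b c, flt1 f a b → flt1 f b c → flt1 f a c
  flt1_irrefl : ∀ f a, ¬ flt1 f a a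
  flt1_trichot : ∀ f a b, a = b ∨ flt1 f a b ∨ flt1 f b a
  /-- `flt f S T` : firm `f` strictly prefers the set `S` to the set `T`
  (responsive extension of `flt1`). -/
  flt : F → Finset W → Finset W → Prop
  flt_trans : ∀ f S T U, flt f S T → flt f T U → flt f S U
  flt_irrefl : ∀ f S, ¬ flt f S S
  resp_add : ∀ f (S : Finset W) (w : W), w ∉ S →
    (flt f (insert w S) S ↔ flt1 f (some w) none)
  resp_swap : ∀ f (S : Finset W) (w w' : W), w ∉ S → w' ∉ S → w ≠ w' →
    (flt f (insert w S) (insert w' S) ↔ flt1 f (some w) (some w'))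

variable {F W : Type} [DecidableEq W] [DecidableEq F] [Fintype W]

/-- The set of workers matched to firm `f` under the matching `μ`. -/
def matchedSet (μ : W → Option F) (f : F) : Finset W :=
  Finset.univ.filter (fun w => μ w = some f)

/-- `μ` respects all capacity constraints. -/
def MTO.isMatching (I : MTO F W) (μ : W → Option F) : Prop :=
  ∀ f, (matchedSet μ f).card ≤ I.cap f

/-- No agent is matched to an unacceptable partner. -/
def MTO.indivRational (I : MTO F W) (μ : W → Option F) : Prop :=
  (∀ w f, μ w = some f → ¬ I.wlt w none (some f)) ∧
  (∀ w f, μ w = some f → ¬ I.flt1 f none (some w))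

/-- The worker-firm pair `(w, f)` blocks `μ`. -/
def MTO.blocks (I : MTO F W) (μ : W → Option F) (w : W) (f : F) : Prop :=
  I.wlt w (some f) (μ w) ∧
  ∃ S ⊆ matchedSet μ f, (insert w S).card ≤ I.cap f ∧
    I.flt f (insert w S) (matchedSet μ f)

/-- Stability: a feasible, individually rational matching with no blocking pair. -/
def MTO.isStable (I : MTO F W) (μ : W → Option F) : Prop :=
  I.isMatching μ ∧ I.indivRational μ ∧ ∀ w f, ¬ I.blocks μ w f

/-- `μ` is the worker-optimal stable matching (output of WPDA). -/
def MTO.workerOptimal (I : MTO F W) (μ : W → Option F) : Prop :=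
  I.isStable μ ∧ ∀ μ', I.isStable μ' → ∀ w, μ' w = μ w ∨ I.wlt w (μ w) (μ' w)

/-- `μ` is the firm-optimal stable matching (output of FPDA). -/
def MTO.firmOptimal (I : MTO F W) (μ : W → Option F) : Prop :=
  I.isStable μ ∧ ∀ μ', I.isStable μ' → ∀ f,
    matchedSet μ' f = matchedSet μ f ∨ I.flt f (matchedSet μ f) (matchedSet μ' f)

/-- The instance obtained from `I` by setting the capacity of firm `f` to `b`. -/
def MTO.withCap (I : MTO F W) (f : F) (b : ℕ) : MTO F W :=
  { I with cap := Function.update I.cap f b }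

/-- The peak of firm `f`: the largest number of workers matched to `f` in any
stable matching for any choice of `f`'s capacity. -/
noncomputable def MTO.peak (I : MTO F W) (f : F) : ℕ :=
  sSup {n | ∃ b μ, (I.withCap f b).isStable μ ∧ (matchedSet μ f).card = n}

/-- `w` proposes to `f` at some point of WPDA, where `μ` is the worker-optimal
stable matching (i.e. the WPDA outcome): `w` finds `f` acceptable and `f` is
weakly preferred by `w` to its final WPDA match. -/
def MTO.proposesTo (I : MTO F W) (μ : W → Option F) (w : W) (f : F) : Prop :=
  I.wlt w (some f) none ∧ (μ w = some f ∨ I.wlt w (some f) (μ w))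

/-- All workers in `S` are acceptable to `f`. -/
def MTO.acceptableSet (I : MTO F W) (f : F) (S : Finset W) : Prop :=
  ∀ w ∈ S, ¬ I.flt1 f none (some w)

/-- Strongly monotone preferences: any larger acceptable set is strictly
preferred to any smaller acceptable set. -/
def MTO.stronglyMonotone (I : MTO F W) (f : F) : Prop :=
  ∀ S T : Finset W, I.acceptableSet f S → I.acceptableSet f T →
    T.card < S.card → I.flt f S T

section RuralAux

attribute [local instance 0] Classical.propDecidable

lemma mem_matchedSet' {μ : W → Option F} {f : F} {w : W} :
    w ∈ matchedSet μ f ↔ μ w = some f := by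
  simp [matchedSet]

/-- If `w` strictly prefers `g` to its match under the stable matching `μ`, and `w`
is acceptable to `g`, then `g` is full under `μ` and prefers each of its matched
workers to `w`. -/
lemma rh_reject (I : MTO F W) {μ : W → Option F} (hμ : I.isStable μ) {w : W} {g : F}
    (hpref : I.wlt w (some g) (μ w)) (hacc : ¬ I.flt1 g none (some w)) :
    (matchedSet μ g).card = I.cap g ∧
      ∀ u ∈ matchedSet μ g, I.flt1 g (some u) (some w) := by
  have hw : w ∉ matchedSet μ g := by
    intro h
    rw [mem_matchedSet'] at h
    rw [h] at hpref
    exact I.wlt_irrefl w _ hpref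
  have hfw : I.flt1 g (some w) none := by
    rcases I.flt1_trichot g (some w) none with h | h | h
    · exact absurd h (by simp)
    · exact h
    · exact absurd h hacc
  have hfull : (matchedSet μ g).card = I.cap g := by
    by_contra hne
    have hlt : (matchedSet μ g).card < I.cap g := lt_of_le_of_ne (hμ.1 g) hne
    refine hμ.2.2 w g ⟨hpref, matchedSet μ g, Finset.Subset.refl _, ?_, ?_⟩
    · rw [Finset.card_insert_of_notMem hw]; omega
    · exact (I.resp_add g _ w hw).mpr hfw
  refine ⟨hfull, ?_⟩
  intro u hu
  by_contra hnot
  have hne : w ≠ u := fun h => hw (h ▸ hu)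
  have hwu : I.flt1 g (some w) (some u) := by
    rcases I.flt1_trichot g (some w) (some u) with h | h | h
    · exact absurd (Option.some.inj h) hne
    · exact h
    · exact absurd h hnot
  have huS : u ∉ (matchedSet μ g).erase u := Finset.notMem_erase u _
  have hwS : w ∉ (matchedSet μ g).erase u := fun h => hw (Finset.mem_of_mem_erase h)
  have hins : insert u ((matchedSet μ g).erase u) = matchedSet μ g :=
    Finset.insert_erase hu
  refine hμ.2.2 w g ⟨hpref, (matchedSet μ g).erase u, Finset.erase_subset u _, ?_, ?_⟩
  · rw [Finset.card_insert_of_notMem hwS, Finset.card_erase_of_mem hu]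
    have h1 : 0 < (matchedSet μ g).card := Finset.card_pos.mpr ⟨u, hu⟩
    have h2 := hμ.1 g
    omega
  · have h := (I.resp_swap g ((matchedSet μ g).erase u) w u hwS huS hne).mpr hwu
    rwa [hins] at h

/-- Key counting lemma: among workers strictly preferring their `μ`-match to their
`ν`-match, the number matched to `g` under `μ` equals the number matched to `g`
under `ν`. -/
lemma rh_key (I : MTO F W) {μ ν : W → Option F} (hμ : I.isStable μ) (hν : I.isStable ν)
    (g : F) :
    ((Finset.univ.filter (fun w => I.wlt w (μ w) (ν w))).filter
        (fun w => μ w = some g)).card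
  = ((Finset.univ.filter (fun w => I.wlt w (μ w) (ν w))).filter
        (fun w => ν w = some g)).card := by
  set M := Finset.univ.filter (fun w : W => I.wlt w (μ w) (ν w)) with hM
  have hMmem : ∀ w ∈ M, I.wlt w (μ w) (ν w) := fun w hw => (Finset.mem_filter.mp hw).2
  set T : Finset (Option F) := Finset.image μ Finset.univ ∪ Finset.image ν Finset.univ
    with hT
  have hμT : ∀ w ∈ M, μ w ∈ T := fun w _ =>
    Finset.mem_union_left _ (Finset.mem_image_of_mem μ (Finset.mem_univ w))
  have hνT : ∀ w ∈ M, ν w ∈ T := fun w _ =>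
    Finset.mem_union_right _ (Finset.mem_image_of_mem ν (Finset.mem_univ w))
  have h1 : M.card = ∑ o ∈ T, (M.filter (fun w => μ w = o)).card :=
    Finset.card_eq_sum_card_fiberwise hμT
  have h2 : M.card = ∑ o ∈ T, (M.filter (fun w => ν w = o)).card :=
    Finset.card_eq_sum_card_fiberwise hνT
  have h3 : ∀ o ∈ T,
      (M.filter (fun w => μ w = o)).card ≤ (M.filter (fun w => ν w = o)).card := by
    intro o ho
    rcases o with _ | g'
    · -- no worker preferring its `μ`-match is unmatched under `μ`
      have he : M.filter (fun w => μ w = none) = ∅ := by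
        rw [Finset.filter_eq_empty_iff]
        intro w hw h
        have hpref := hMmem w hw
        rw [h] at hpref
        cases hn : ν w with
        | none => rw [hn] at hpref; exact I.wlt_irrefl w none hpref
        | some f' => rw [hn] at hpref; exact hν.2.1.1 w f' hn hpref
      simp [he]
    · rcases Finset.eq_empty_or_nonempty (M.filter (fun w => μ w = some g')) with he | hne
      · simp [he]
      obtain ⟨w₀, hw₀⟩ := hne
      have hw₀M : w₀ ∈ M := (Finset.mem_filter.mp hw₀).1
      have hw₀g : μ w₀ = some g' := (Finset.mem_filter.mp hw₀).2
      have hpref : I.wlt w₀ (some g') (ν w₀) := by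
        have h := hMmem w₀ hw₀M; rwa [hw₀g] at h
      have hacc : ¬ I.flt1 g' none (some w₀) := hμ.2.1.2 w₀ g' hw₀g
      obtain ⟨hfull, hall⟩ := rh_reject I hν hpref hacc
      have step1 : M.filter (fun w => μ w = some g')
          ⊆ matchedSet μ g' \ matchedSet ν g' := by
        intro w hw
        obtain ⟨hwM, hwg⟩ := Finset.mem_filter.mp hw
        rw [Finset.mem_sdiff, mem_matchedSet', mem_matchedSet']
        refine ⟨hwg, fun h => ?_⟩
        have h' := hMmem w hwM
        rw [hwg, h] at h'
        exact I.wlt_irrefl w _ h'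
      have step3 : matchedSet ν g' \ matchedSet μ g'
          ⊆ M.filter (fun w => ν w = some g') := by
        intro w hw
        rw [Finset.mem_sdiff, mem_matchedSet', mem_matchedSet'] at hw
        obtain ⟨hwg, hwng⟩ := hw
        refine Finset.mem_filter.mpr ⟨?_, hwg⟩
        rw [hM]
        refine Finset.mem_filter.mpr ⟨Finset.mem_univ w, ?_⟩
        rcases I.wlt_trichot w (μ w) (ν w) with h | h | h
        · exact absurd (h.trans hwg) hwng
        · exact h
        · exfalso
          have hpref' : I.wlt w (some g') (μ w) := by rwa [hwg] at h
          have hacc' : ¬ I.flt1 g' none (some w) := hν.2.1.2 w g' hwg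
          obtain ⟨_, hall'⟩ := rh_reject I hμ hpref' hacc'
          have hA : I.flt1 g' (some w₀) (some w) := hall' w₀ (mem_matchedSet'.mpr hw₀g)
          have hB : I.flt1 g' (some w) (some w₀) := hall w (mem_matchedSet'.mpr hwg)
          exact I.flt1_irrefl g' _ (I.flt1_trans g' _ _ _ hA hB)
      have c1 := Finset.card_le_card step1
      have c3 := Finset.card_le_card step3
      have e1 := Finset.card_sdiff_add_card_inter (matchedSet μ g') (matchedSet ν g')
      have e2 := Finset.card_sdiff_add_card_inter (matchedSet ν g') (matchedSet μ g')
      have e3 : (matchedSet μ g' ∩ matchedSet ν g').card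
          = (matchedSet ν g' ∩ matchedSet μ g').card := by rw [Finset.inter_comm]
      have hle : (matchedSet μ g').card ≤ (matchedSet ν g').card := by
        rw [hfull]; exact hμ.1 g'
      omega
  have hsum : (∑ o ∈ T, (M.filter (fun w => μ w = o)).card)
      = ∑ o ∈ T, (M.filter (fun w => ν w = o)).card := by rw [← h1]; exact h2
  have h4 := (Finset.sum_eq_sum_iff_of_le h3).mp hsum
  by_cases hg : (some g : Option F) ∈ T
  · exact h4 _ hg
  · have e1 : M.filter (fun w => μ w = some g) = ∅ := by
      rw [Finset.filter_eq_empty_iff]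
      intro w hw h
      exact hg (h ▸ hμT w hw)
    have e2 : M.filter (fun w => ν w = some g) = ∅ := by
      rw [Finset.filter_eq_empty_iff]
      intro w hw h
      exact hg (h ▸ hνT w hw)
    rw [e1, e2]

/-- The difference set `μ(g) \ ν(g)` splits into workers preferring `μ` and workers
preferring `ν`. -/
lemma rh_decomp (I : MTO F W) (μ ν : W → Option F) (g : F) :
    (matchedSet μ g \ matchedSet ν g).card
      = ((Finset.univ.filter (fun w => I.wlt w (μ w) (ν w))).filter
          (fun w => μ w = some g)).card
      + ((Finset.univ.filter (fun w => I.wlt w (ν w) (μ w))).filter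
          (fun w => μ w = some g)).card := by
  have hdis : Disjoint
      ((Finset.univ.filter (fun w => I.wlt w (μ w) (ν w))).filter (fun w => μ w = some g))
      ((Finset.univ.filter (fun w => I.wlt w (ν w) (μ w))).filter
        (fun w => μ w = some g)) := by
    rw [Finset.disjoint_left]
    intro w hw1 hw2
    have h1 := (Finset.mem_filter.mp (Finset.mem_filter.mp hw1).1).2
    have h2 := (Finset.mem_filter.mp (Finset.mem_filter.mp hw2).1).2
    exact I.wlt_irrefl w _ (I.wlt_trans w _ _ _ h1 h2)
  have hset : matchedSet μ g \ matchedSet ν g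
      = ((Finset.univ.filter (fun w => I.wlt w (μ w) (ν w))).filter
          (fun w => μ w = some g))
        ∪ ((Finset.univ.filter (fun w => I.wlt w (ν w) (μ w))).filter
          (fun w => μ w = some g)) := by
    ext w
    simp only [Finset.mem_sdiff, Finset.mem_union, Finset.mem_filter, Finset.mem_univ,
      true_and, mem_matchedSet']
    constructor
    · rintro ⟨h1, h2⟩
      rcases I.wlt_trichot w (μ w) (ν w) with h | h | h
      · exact absurd (h.symm.trans h1) h2
      · exact Or.inl ⟨h, h1⟩
      · exact Or.inr ⟨h, h1⟩
    · rintro (⟨h, h1⟩ | ⟨h, h1⟩)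
      · refine ⟨h1, fun h2 => ?_⟩
        rw [h1, h2] at h
        exact I.wlt_irrefl w _ h
      · refine ⟨h1, fun h2 => ?_⟩
        rw [h1, h2] at h
        exact I.wlt_irrefl w _ h
  rw [hset, Finset.card_union_of_disjoint hdis]

/-- Any two stable matchings assign the same number of workers to each firm. -/
lemma rh_count (I : MTO F W) {μ ν : W → Option F} (hμ : I.isStable μ) (hν : I.isStable ν)
    (g : F) : (matchedSet μ g).card = (matchedSet ν g).card := by
  have d1 := rh_decomp I μ ν g
  have d2 := rh_decomp I ν μ g
  have k1 := rh_key I hμ hν g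
  have k2 := rh_key I hν hμ g
  have e1 := Finset.card_sdiff_add_card_inter (matchedSet μ g) (matchedSet ν g)
  have e2 := Finset.card_sdiff_add_card_inter (matchedSet ν g) (matchedSet μ g)
  have e3 : (matchedSet μ g ∩ matchedSet ν g).card
      = (matchedSet ν g ∩ matchedSet μ g).card := by rw [Finset.inter_comm]
  omega

/-- If some worker prefers its `μ`-match and is matched to `g` under `ν`, then some
worker preferring its `μ`-match is matched to `g` under `μ`. -/
lemma rh_exists (I : MTO F W) {μ ν : W → Option F} (hμ : I.isStable μ) (hν : I.isStable ν)
    {w : W} {g : F} (h : I.wlt w (μ w) (ν w)) (hw : ν w = some g) :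
    ∃ w₀, I.wlt w₀ (μ w₀) (ν w₀) ∧ μ w₀ = some g := by
  have hkey := rh_key I hμ hν g
  have hpos : 0 < ((Finset.univ.filter (fun w => I.wlt w (μ w) (ν w))).filter
      (fun w => ν w = some g)).card :=
    Finset.card_pos.mpr ⟨w, Finset.mem_filter.mpr
      ⟨Finset.mem_filter.mpr ⟨Finset.mem_univ w, h⟩, hw⟩⟩
  rw [← hkey] at hpos
  obtain ⟨w₀, hw₀⟩ := Finset.card_pos.mp hpos
  obtain ⟨hw₀M, hw₀g⟩ := Finset.mem_filter.mp hw₀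
  exact ⟨w₀, (Finset.mem_filter.mp hw₀M).2, hw₀g⟩

end RuralAux

/-- Rural hospitals theorem: every stable matching matches the same number of
workers to a firm `f`; and if `f` is unsaturated in some stable matching then
it is matched with the same set of workers in every stable matching. -/
theorem rural_hospitals_theorem
    {F W : Type} [DecidableEq W] [DecidableEq F] [Fintype W]
    (I : MTO F W) (f : F) :
    (∀ μ μ', I.isStable μ → I.isStable μ' →
      (matchedSet μ f).card = (matchedSet μ' f).card) ∧
    (∀ μ, I.isStable μ → (matchedSet μ f).card < I.cap f →
      ∀ μ', I.isStable μ' → matchedSet μ' f = matchedSet μ f) := by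
  constructor
  · exact fun μ μ' hμ hμ' => rh_count I hμ hμ' f
  · intro μ hμ hlt μ' hμ'
    refine Finset.eq_of_subset_of_card_le ?_ (le_of_eq (rh_count I hμ hμ' f))
    intro w hw
    rw [mem_matchedSet'] at hw
    rw [mem_matchedSet']
    rcases I.wlt_trichot w (μ w) (μ' w) with h | h | h
    · exact h.trans hw
    · exfalso
      obtain ⟨w₀, hM, hg⟩ := rh_exists I hμ hμ' h hw
      have hpref : I.wlt w₀ (some f) (μ' w₀) := by rwa [hg] at hM
      have hfull := (rh_reject I hμ' hpref (hμ.2.1.2 w₀ f hg)).1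
      have hc := rh_count I hμ hμ' f
      omega
    · exfalso
      have hpref : I.wlt w (some f) (μ w) := by rwa [hw] at h
      have hfull := (rh_reject I hμ hpref (hμ'.2.1.2 w f hw)).1
      omega
end

section
/- Let μ and μ' denote the worker-optimal stable matchings before and after a single firm f increases its capacity by 1 (all preferences and all other capacities unchanged). If the number of workers matched with f is unchanged, i.e., |μ'(f)| = |μ(f)|, then the set of workers matched with f is also unchanged: μ'(f) = μ(f). -/
variable {F W : Type} [DecidableEq W] [DecidableEq F] [Fintype W]

/-- If after a unit capacity increase by firm `f` the number of workers matched
to `f` in the worker-optimal stable matching is unchanged, then the set of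
workers matched to `f` is also unchanged. -/
theorem capacity_increase_same_size_same_set
    {F W : Type} [DecidableEq W] [DecidableEq F] [Fintype W]
    (I : MTO F W) (f : F) (μ μ' : W → Option F)
    (hμ : I.workerOptimal μ)
    (hμ' : (I.withCap f (I.cap f + 1)).workerOptimal μ')
    (hcard : (matchedSet μ' f).card = (matchedSet μ f).card) :
    matchedSet μ' f = matchedSet μ f := by
  set I' := I.withCap f (I.cap f + 1) with hI'
  have hcapne : ∀ g, g ≠ f → I'.cap g = I.cap g := by
    intro g hg; simp [hI', MTO.withCap, Function.update_of_ne hg]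
  have hcapI' : ∀ g, I.cap g ≤ I'.cap g := by
    intro g
    by_cases hg : g = f
    · rw [hg]; simp [hI', MTO.withCap]
    · rw [hcapne g hg]
  have hcapf : I'.cap f = I.cap f + 1 := by simp [hI', MTO.withCap]
  obtain ⟨⟨hμm, hμir, hμnb⟩, hμopt⟩ := hμ
  obtain ⟨⟨hμ'm, hμ'ir, hμ'nb⟩, hμ'opt⟩ := hμ'
  -- μ' is stable in the original instance I
  have hμ'f : (matchedSet μ' f).card ≤ I.cap f := by
    rw [hcard]; exact hμm f
  have hstab' : I.isStable μ' := by
    refine ⟨?_, hμ'ir, ?_⟩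
    · intro g
      by_cases hg : g = f
      · rw [hg]; exact hμ'f
      · have := hμ'm g; rwa [hcapne g hg] at this
    · intro w g hb
      obtain ⟨hlt, S, hS, hc, hf⟩ := hb
      exact hμ'nb w g ⟨hlt, S, hS, le_trans hc (hcapI' g), hf⟩
  have hA : ∀ w, μ' w = μ w ∨ I.wlt w (μ w) (μ' w) := hμopt μ' hstab'
  -- μ is stable in the enlarged instance I'
  have hstab : I'.isStable μ := by
    refine ⟨fun g => le_trans (hμm g) (hcapI' g), hμir, ?_⟩
    intro w g hb
    obtain ⟨hlt, S, hS, hc, hf⟩ := hb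
    by_cases hg : g = f
    · rw [hg] at hlt hS hc hf
      by_cases hle : (insert w S).card ≤ I.cap f
      · exact hμnb w f ⟨hlt, S, hS, hle, hf⟩
      · push_neg at hle
        have hc' : (insert w S).card = I.cap f + 1 :=
          le_antisymm (by rwa [hcapf] at hc) hle
        have hwS : w ∉ S := by
          intro hw
          rw [Finset.insert_eq_self.mpr hw] at hc'
          have h1 := Finset.card_le_card hS
          have h2 := hμm f
          omega
        have hScard : S.card = I.cap f := by
          have := Finset.card_insert_of_notMem hwS
          omega
        have hSeq : S = matchedSet μ f :=
          Finset.eq_of_subset_of_card_le hS (by rw [hScard]; exact hμm f)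
        have hwM : w ∉ matchedSet μ f := by rw [← hSeq]; exact hwS
        have hacc : I.flt1 f (some w) none := by
          rw [hSeq] at hf
          exact (I.resp_add f (matchedSet μ f) w hwM).mp hf
        have hwlt' : I.wlt w (some f) (μ' w) := by
          rcases hA w with h | h
          · rwa [h]
          · exact I.wlt_trans w _ _ _ hlt h
        have hwM' : w ∉ matchedSet μ' f := by
          intro hw
          have : μ' w = some f := (Finset.mem_filter.mp hw).2
          rw [this] at hwlt'
          exact I.wlt_irrefl w _ hwlt'
        refine hμ'nb w f ⟨hwlt', matchedSet μ' f, Finset.Subset.refl _, ?_, ?_⟩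
        · rw [Finset.card_insert_of_notMem hwM', hcard, ← hSeq, hScard, hcapf]
        · exact (I.resp_add f (matchedSet μ' f) w hwM').mpr hacc
    · exact hμnb w g ⟨hlt, S, hS, by rwa [hcapne g hg] at hc, hf⟩
  have hB : ∀ w, μ w = μ' w ∨ I.wlt w (μ' w) (μ w) := hμ'opt μ hstab
  have heq : ∀ w, μ' w = μ w := by
    intro w
    rcases hA w with h | h
    · exact h
    · rcases hB w with h' | h'
      · exact h'.symm
      · exact absurd (I.wlt_trans w _ _ _ h h') (I.wlt_irrefl w _)
  unfold matchedSet
  ext w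
  simp [heq w]
end

section
/- Let μ and μ' denote the worker-optimal stable matchings before and after a firm f increases its capacity by 1. Then the number of workers matched to f weakly increases: |μ'(f)| ≥ |μ(f)|. -/
variable {F W : Type} [DecidableEq W] [DecidableEq F] [Fintype W]

/-- When firm `f` increases its capacity by one, the number of workers matched
to it in the worker-optimal stable matching weakly increases. -/
theorem capacity_increase_match_size_weakly_increases
    {F W : Type} [DecidableEq W] [DecidableEq F] [Fintype W]
    (I : MTO F W) (f : F) (μ μ' : W → Option F)
    (hμ : I.workerOptimal μ)
    (hμ' : (I.withCap f (I.cap f + 1)).workerOptimal μ') :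
    (matchedSet μ f).card ≤ (matchedSet μ' f).card := by
  by_contra hcon
  push_neg at hcon
  obtain ⟨⟨hμm, hμir, hμnb⟩, hμopt⟩ := hμ
  obtain ⟨⟨hμ'm, hμ'ir, hμ'nb⟩, hμ'opt⟩ := hμ'
  have hcapf : (matchedSet μ f).card ≤ I.cap f := hμm f
  -- Step A : μ' is stable in I
  have hA : I.isStable μ' := by
    refine ⟨?_, hμ'ir, ?_⟩
    · intro g
      by_cases hg : g = f
      · subst hg; omega
      · have := hμ'm g
        simpa [MTO.withCap, Function.update_of_ne hg] using this
    · intro w g hb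
      obtain ⟨hw, S, hS, hc, hf⟩ := hb
      refine hμ'nb w g ⟨hw, S, hS, ?_, hf⟩
      by_cases hg : g = f
      · subst hg
        simp only [MTO.withCap, Function.update_self]
        omega
      · simpa [MTO.withCap, Function.update_of_ne hg] using hc
  have hB := hμopt μ' hA
  -- Step C : μ is not stable in the enlarged instance
  have hC : ¬ (I.withCap f (I.cap f + 1)).isStable μ := by
    intro hst
    have hB' := hμ'opt μ hst
    have heq : μ = μ' := by
      funext w
      rcases hB w with h | h
      · exact h.symm
      · rcases hB' w with h' | h'
        · exact h'
        · exact absurd (I.wlt_trans w _ _ _ h h') (I.wlt_irrefl w _)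
    rw [heq] at hcon
    omega
  -- Step D : μ is feasible and IR in I', so failure of stability gives a block
  have hD : ∃ w g, (I.withCap f (I.cap f + 1)).blocks μ w g := by
    by_contra hnb
    push_neg at hnb
    refine hC ⟨?_, hμir, hnb⟩
    intro g
    by_cases hg : g = f
    · subst hg
      simp only [MTO.withCap, Function.update_self]
      omega
    · simpa [MTO.withCap, Function.update_of_ne hg] using hμm g
  obtain ⟨w, g, hw, S, hS, hc, hf⟩ := hD
  have hgf : g = f := by
    by_contra hg
    exact hμnb w g ⟨hw, S, hS, by simpa [MTO.withCap, Function.update_of_ne hg] using hc, hf⟩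
  rw [hgf] at hw hS hc hf
  -- the block must exceed the old capacity
  have hcS : ¬ (insert w S).card ≤ I.cap f := fun hle => hμnb w f ⟨hw, S, hS, hle, hf⟩
  have hc' : (insert w S).card ≤ I.cap f + 1 := by
    simpa [MTO.withCap] using hc
  have hwS : w ∉ S := by
    intro hmem
    rw [Finset.insert_eq_self.mpr hmem] at hcS
    exact hcS (le_trans (Finset.card_le_card hS) hcapf)
  have hcard : S.card = I.cap f := by
    rw [Finset.card_insert_of_notMem hwS] at hcS hc'
    omega
  have hSeq : S = matchedSet μ f := by
    apply Finset.eq_of_subset_of_card_le hS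
    rw [hcard]; exact hcapf
  have hwnμ : μ w ≠ some f := by
    intro h
    rw [h] at hw
    exact I.wlt_irrefl w _ hw
  have hwnotin : w ∉ matchedSet μ f := by
    simp [matchedSet, hwnμ]
  have hacc : I.flt1 f (some w) none := by
    rw [hSeq] at hf
    exact (I.resp_add f _ w hwnotin).mp hf
  have hw2 : I.wlt w (some f) (μ' w) := by
    rcases hB w with h | h
    · rw [h]; exact hw
    · exact I.wlt_trans w _ _ _ hw h
  have hwnotin' : w ∉ matchedSet μ' f := by
    simp only [matchedSet, Finset.mem_filter, Finset.mem_univ, true_and]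
    intro h
    rw [h] at hw2
    exact I.wlt_irrefl w _ hw2
  refine hμ'nb w f ⟨hw2, matchedSet μ' f, Finset.Subset.refl _, ?_,
    (I.resp_add f _ w hwnotin').mpr hacc⟩
  have hle := Finset.card_insert_le w (matchedSet μ' f)
  simp only [MTO.withCap, Function.update_self]
  omega
end

section
/- Suppose firm f has strongly monotone responsive preferences. Let μ and μ' be the worker-optimal stable matchings before and after f increases its capacity by 1 (all else unchanged). Then μ'(f) ⪰_f μ(f), i.e., the firm weakly prefers its new match. -/
variable {F W : Type} [DecidableEq W] [DecidableEq F] [Fintype W]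

/-- Under strongly monotone preferences, a firm weakly prefers its
worker-optimal match after increasing its capacity by one. -/
theorem strongly_monotone_firm_weakly_improves_on_capacity_increase
    {F W : Type} [DecidableEq W] [DecidableEq F] [Fintype W]
    (I : MTO F W) (f : F) (hsm : I.stronglyMonotone f)
    (μ μ' : W → Option F)
    (hμ : I.workerOptimal μ)
    (hμ' : (I.withCap f (I.cap f + 1)).workerOptimal μ') :
    matchedSet μ' f = matchedSet μ f ∨
      I.flt f (matchedSet μ' f) (matchedSet μ f) := by
  obtain ⟨⟨hμmatch, hμIR, hμblock⟩, hμopt⟩ := hμ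
  obtain ⟨⟨hμ'match, hμ'IR, hμ'block⟩, hμ'opt⟩ := hμ'
  set M : Finset W := matchedSet μ f with hM
  set M' : Finset W := matchedSet μ' f with hM'
  have hmemM : ∀ w : W, w ∈ M ↔ μ w = some f := by
    intro w; simp [hM, matchedSet]
  have hmemM' : ∀ w : W, w ∈ M' ↔ μ' w = some f := by
    intro w; simp [hM', matchedSet]
  have hcapf' : (I.withCap f (I.cap f + 1)).cap f = I.cap f + 1 := by
    simp [MTO.withCap]
  have hcaple : ∀ g, I.cap g ≤ (I.withCap f (I.cap f + 1)).cap g := by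
    intro g
    rcases eq_or_ne g f with rfl | hg
    · rw [hcapf']; omega
    · simp [MTO.withCap, Function.update_of_ne hg]
  have hMle : M.card ≤ I.cap f := hμmatch f
  have hM'le : M'.card ≤ I.cap f + 1 := by
    have := hμ'match f; rwa [hcapf'] at this
  have haccM : I.acceptableSet f M := by
    intro w hw; exact hμIR.2 w f ((hmemM w).1 hw)
  have haccM' : I.acceptableSet f M' := by
    intro w hw; exact hμ'IR.2 w f ((hmemM' w).1 hw)
  by_cases hcase : M'.card ≤ I.cap f
  · -- μ' is stable in the original instance I
    have hstab : I.isStable μ' := by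
      refine ⟨?_, hμ'IR, ?_⟩
      · intro g
        rcases eq_or_ne g f with rfl | hg
        · exact hcase
        · have := hμ'match g
          simpa [MTO.withCap, Function.update_of_ne hg] using this
      · intro w g hb
        obtain ⟨h1, S, hS, hc, hf⟩ := hb
        exact hμ'block w g ⟨h1, S, hS, le_trans hc (hcaple g), hf⟩
    -- M ⊆ M'
    have hsub : M ⊆ M' := by
      intro w hw
      have hwf : μ w = some f := (hmemM w).1 hw
      by_contra hw'
      have hw'ne : μ' w ≠ some f := fun h => hw' ((hmemM' w).2 h)
      have hw'notmem : w ∉ M' := hw'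
      -- w is acceptable to f
      have hacc : ¬ I.flt1 f none (some w) := hμIR.2 w f hwf
      have haccw : I.flt1 f (some w) none := by
        rcases I.flt1_trichot f (some w) none with h | h | h
        · exact absurd h (by simp)
        · exact h
        · exact absurd h hacc
      -- w cannot prefer f to μ' w (else (w,f) blocks μ' in the new instance)
      have hnb : ¬ I.wlt w (some f) (μ' w) := by
        intro hpref
        apply hμ'block w f
        refine ⟨hpref, M', le_refl _, ?_, ?_⟩
        · rw [Finset.card_insert_of_notMem hw'notmem, hcapf']
          omega
        · exact ((I.withCap f (I.cap f + 1)).resp_add f M' w hw'notmem).mpr haccw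
      rcases I.wlt_trichot w (some f) (μ' w) with heq | h1 | h2
      · exact hw'ne heq.symm
      · exact hnb h1
      · rcases hμopt μ' hstab w with heq | hlt
        · rw [heq, hwf] at hw'ne; exact hw'ne rfl
        · rw [hwf] at hlt
          exact I.wlt_irrefl w (some f) (I.wlt_trans w _ _ _ hlt h2)
    rcases le_or_gt M'.card M.card with hle | hlt
    · left; exact (Finset.eq_of_subset_of_card_le hsub hle).symm
    · right; exact hsm M' M haccM' haccM hlt
  · right
    exact hsm M' M haccM' haccM (lt_of_le_of_lt hMle (not_le.mp hcase))
end

section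
/- When a single firm increases its capacity by 1 (all preferences and other capacities unchanged), every worker weakly improves under both the worker-optimal and the firm-optimal stable matchings, and every other firm weakly worsens under both the worker-optimal and firm-optimal stable matchings. -/
variable {F W : Type} [DecidableEq W] [DecidableEq F] [Fintype W]

namespace CapHelper
set_option linter.unusedSectionVars false

open Finset

variable {F W : Type} [DecidableEq W] [DecidableEq F] [Fintype W]

lemma mem_matchedSet {μ : W → Option F} {g : F} {w : W} :
    w ∈ matchedSet μ g ↔ μ w = some g := by
  simp [matchedSet]

section Basic

variable {K : MTO F W}

lemma wlt_asymm {w : W} {a b : Option F} (h : K.wlt w a b) : ¬ K.wlt w b a :=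
  fun h' => K.wlt_irrefl w a (K.wlt_trans w a b a h h')

lemma flt1_asymm {g : F} {a b : Option W} (h : K.flt1 g a b) : ¬ K.flt1 g b a :=
  fun h' => K.flt1_irrefl g a (K.flt1_trans g a b a h h')

lemma flt_asymm {g : F} {S T : Finset W} (h : K.flt g S T) : ¬ K.flt g T S :=
  fun h' => K.flt_irrefl g S (K.flt_trans g S T S h h')

/-- A worker matched under a stable matching is acceptable to its firm. -/
lemma acceptable_of_matched {σ : W → Option F} (hσ : K.isStable σ) {w : W} {g : F}
    (h : σ w = some g) : K.flt1 g (some w) none := by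
  have hIR := hσ.2.1.2 w g h
  rcases K.flt1_trichot g (some w) none with h' | h' | h'
  · exact absurd h' (by simp)
  · exact h'
  · exact absurd h' hIR

lemma not_matched_of_want {σ : W → Option F} {w : W} {g : F}
    (h : K.wlt w (some g) (σ w)) : σ w ≠ some g := by
  intro he; rw [he] at h; exact K.wlt_irrefl w (some g) h

/-- If `w` wants `g` and is in no blocking pair, every worker matched to `g` beats some
condition: blocking via a swap. -/
lemma block_swap {σ : W → Option F} (hσ : K.isStable σ) {w : W} {g : F}
    (hwant : K.wlt w (some g) (σ w)) {u : W} (hu : u ∈ matchedSet σ g)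
    (hlt : K.flt1 g (some w) (some u)) : False := by
  have hwne : σ w ≠ some g := not_matched_of_want hwant
  have hwmem : w ∉ matchedSet σ g := fun hmem => hwne (mem_matchedSet.1 hmem)
  have hne : w ≠ u := fun he => hwmem (he ▸ hu)
  apply hσ.2.2 w g
  refine ⟨hwant, (matchedSet σ g).erase u, erase_subset _ _, ?_, ?_⟩
  · have hw' : w ∉ (matchedSet σ g).erase u := fun h => hwmem (mem_of_mem_erase h)
    rw [card_insert_of_notMem hw', card_erase_of_mem hu]
    have := hσ.1 g
    have hpos : 0 < (matchedSet σ g).card := card_pos.2 ⟨u, hu⟩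
    omega
  · have hw' : w ∉ (matchedSet σ g).erase u := fun h => hwmem (mem_of_mem_erase h)
    have hu' : u ∉ (matchedSet σ g).erase u := notMem_erase _ _
    have h2 := (K.resp_swap g ((matchedSet σ g).erase u) w u hw' hu' hne).2 hlt
    rwa [insert_erase hu] at h2

/-- Every worker matched to a desired firm is better (for the firm) than the envious worker. -/
lemma all_better {σ : W → Option F} (hσ : K.isStable σ) {w : W} {g : F}
    (hwant : K.wlt w (some g) (σ w)) :
    ∀ u ∈ matchedSet σ g, K.flt1 g (some u) (some w) := by
  intro u hu
  have hwne : σ w ≠ some g := not_matched_of_want hwant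
  have hne : (some u : Option W) ≠ some w := by
    intro he
    have huw : u = w := by injection he
    exact hwne (huw ▸ mem_matchedSet.1 hu)
  rcases K.flt1_trichot g (some u) (some w) with h | h | h
  · exact absurd h hne
  · exact h
  · exact absurd (block_swap hσ hwant hu h) (by simp)

/-- If `w` wants `g`, is acceptable, then `g` is full. -/
lemma firm_full {σ : W → Option F} (hσ : K.isStable σ) {w : W} {g : F}
    (hwant : K.wlt w (some g) (σ w)) (hacc : K.flt1 g (some w) none) :
    (matchedSet σ g).card = K.cap g := by
  have hle := hσ.1 g
  by_contra hne
  have hlt : (matchedSet σ g).card < K.cap g := lt_of_le_of_ne hle hne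
  have hwne : σ w ≠ some g := not_matched_of_want hwant
  have hwmem : w ∉ matchedSet σ g := fun hmem => hwne (mem_matchedSet.1 hmem)
  apply hσ.2.2 w g
  refine ⟨hwant, matchedSet σ g, Subset.rfl, ?_, (K.resp_add g _ w hwmem).2 hacc⟩
  rw [card_insert_of_notMem hwmem]
  omega

end Basic

end CapHelper

namespace CapHelper
set_option linter.unusedSectionVars false

open Finset

section Core

variable {F W : Type} [DecidableEq W] [DecidableEq F] [Fintype W]

open scoped Classical in
/-- Workers strictly preferring `μ` to `μ'`. -/
noncomputable def AAset (J : MTO F W) (μ μ' : W → Option F) : Finset W :=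
  Finset.univ.filter fun w => J.wlt w (μ w) (μ' w)

open scoped Classical in
lemma mem_AAset {J : MTO F W} {μ μ' : W → Option F} {w : W} :
    w ∈ AAset J μ μ' ↔ J.wlt w (μ w) (μ' w) := by
  simp [AAset]

/-- The worker-pointwise meet of `μ` and `μ'`. -/
noncomputable def meetM (J : MTO F W) (μ μ' : W → Option F) : W → Option F :=
  fun w => if w ∈ AAset J μ μ' then μ' w else μ w

/-- The worker-pointwise join of `μ` and `μ'`. -/
noncomputable def joinM (J : MTO F W) (μ μ' : W → Option F) : W → Option F :=
  fun w => if w ∈ AAset J μ μ' then μ w else μ' w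

/-- The instance `J` with capacities replaced by `c'`. -/
def bump (J : MTO F W) (c' : F → ℕ) : MTO F W := { J with cap := c' }

variable {J : MTO F W} {c' : F → ℕ} {μ μ' : W → Option F}

/-- Structural facts about the comparison of a stable matching of `J` and one of
the larger-capacity instance `J'`. -/
structure CoreFacts (J : MTO F W) (c' : F → ℕ) (μ μ' : W → Option F) : Prop where
  matched : ∀ u ∈ AAset J μ μ', ∃ g, μ u = some g
  capEq : ∀ g u, u ∈ AAset J μ μ' → μ u = some g → c' g = J.cap g
  fullμ : ∀ g u, u ∈ AAset J μ μ' → μ u = some g → (matchedSet μ g).card = J.cap g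
  fullμ' : ∀ g u, u ∈ AAset J μ μ' → μ u = some g → (matchedSet μ' g).card = J.cap g
  sdiffEq : ∀ g u, u ∈ AAset J μ μ' → μ u = some g →
    matchedSet μ' g \ AAset J μ μ' = matchedSet μ g \ AAset J μ μ'
  matched' : ∀ u ∈ AAset J μ μ', ∃ g u₁, μ' u = some g ∧ u₁ ∈ AAset J μ μ' ∧ μ u₁ = some g

/-- (S1) every worker in `A` is matched under `μ`. -/
lemma AA_matched (hμ' : (bump J c').isStable μ') :
    ∀ u ∈ AAset J μ μ', ∃ g, μ u = some g := by
  intro u hu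
  have hA : J.wlt u (μ u) (μ' u) := mem_AAset.1 hu
  cases hμu : μ u with
  | some g => exact ⟨g, rfl⟩
  | none =>
    rw [hμu] at hA
    cases hμ'u : μ' u with
    | none => rw [hμ'u] at hA; exact absurd hA (J.wlt_irrefl u none)
    | some g' =>
      rw [hμ'u] at hA
      exact absurd hA (hμ'.2.1.1 u g' hμ'u)

/-- every worker matched to `g` by `μ'` beats (for `g`) every `A`-worker matched to `g` by `μ`. -/
lemma AA_all_better (hμ' : (bump J c').isStable μ') {g : F} {u : W}
    (hu : u ∈ AAset J μ μ') (hg : μ u = some g) :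
    ∀ x ∈ matchedSet μ' g, J.flt1 g (some x) (some u) := by
  have hA : J.wlt u (μ u) (μ' u) := mem_AAset.1 hu
  rw [hg] at hA
  exact all_better (K := bump J c') hμ' hA

lemma AA_full' (hμ : J.isStable μ) (hμ' : (bump J c').isStable μ') {g : F} {u : W}
    (hu : u ∈ AAset J μ μ') (hg : μ u = some g) :
    (matchedSet μ' g).card = c' g := by
  have hA : J.wlt u (μ u) (μ' u) := mem_AAset.1 hu
  rw [hg] at hA
  exact firm_full (K := bump J c') hμ' hA (acceptable_of_matched hμ hg)

/-- (Claim1) a non-`A` worker matched to `g ∈ B` by `μ'` is matched to `g` by `μ`. -/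
lemma AA_claim1 (hμ : J.isStable μ) (hμ' : (bump J c').isStable μ') {g : F} {u : W}
    (hu : u ∈ AAset J μ μ') (hg : μ u = some g) :
    ∀ v ∈ matchedSet μ' g, v ∉ AAset J μ μ' → v ∈ matchedSet μ g := by
  intro v hv hvA
  by_contra hvM
  have hv' : μ' v = some g := mem_matchedSet.1 hv
  have hvm : μ v ≠ some g := fun h => hvM (mem_matchedSet.2 h)
  have hwant : J.wlt v (some g) (μ v) := by
    rcases J.wlt_trichot v (μ v) (μ' v) with h | h | h
    · rw [hv'] at h; exact absurd h hvm
    · exact absurd (mem_AAset.2 h) hvA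
    · rw [hv'] at h; exact h
  exact block_swap (K := J) hμ hwant (mem_matchedSet.2 hg)
    (AA_all_better hμ' hu hg v hv)

end Core

end CapHelper

namespace CapHelper

open Finset

section Core2

variable {F W : Type} [DecidableEq W] [DecidableEq F] [Fintype W]
variable {J : MTO F W} {c' : F → ℕ} {μ μ' : W → Option F}

lemma core_facts (hcap : ∀ g, J.cap g ≤ c' g) (hμ : J.isStable μ)
    (hμ' : (bump J c').isStable μ') : CoreFacts J c' μ μ' := by
  classical
  set A := AAset J μ μ' with hA
  set B : Finset (Option F) := A.image μ with hB
  set Kf : Option F → Finset W := fun b => A.filter (fun u => μ u = b) with hKf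
  set Kf' : Option F → Finset W := fun b => A.filter (fun u => μ' u = b) with hKf'
  have hmemB : ∀ u ∈ A, μ u ∈ B := fun u hu => mem_image_of_mem μ hu
  have hcard1 : A.card = ∑ b ∈ B, (Kf b).card :=
    Finset.card_eq_sum_card_fiberwise hmemB
  have hBsome : ∀ b ∈ B, ∃ g u, b = some g ∧ u ∈ A ∧ μ u = some g := by
    intro b hb
    obtain ⟨u, hu, hub⟩ := mem_image.1 hb
    obtain ⟨g, hg⟩ := AA_matched (c' := c') hμ' u hu
    exact ⟨g, u, by rw [← hub, hg], hu, hg⟩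
  set s' := A.filter (fun u => μ' u ∈ B) with hs'
  have hcard2 : s'.card = ∑ b ∈ B, (Kf' b).card := by
    have h := Finset.card_eq_sum_card_fiberwise (f := μ') (s := s') (t := B)
      (fun u hu => (mem_filter.1 hu).2)
    rw [h]
    refine Finset.sum_congr rfl fun b hb => ?_
    congr 1
    ext u
    simp only [hKf', mem_filter, hs']
    constructor
    · rintro ⟨⟨h1, _⟩, h3⟩; exact ⟨h1, h3⟩
    · rintro ⟨h1, h3⟩; exact ⟨⟨h1, h3 ▸ hb⟩, h3⟩
  have hs'le : s'.card ≤ A.card := card_le_card (filter_subset _ _)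
  -- per-firm facts
  have perb : ∀ g u, u ∈ A → μ u = some g →
      (matchedSet μ' g \ A ⊆ matchedSet μ g \ A) ∧
      (matchedSet μ' g).card = c' g ∧
      Kf (some g) = matchedSet μ g ∩ A ∧
      Kf' (some g) = matchedSet μ' g ∩ A := by
    intro g u hu hg
    refine ⟨?_, AA_full' hμ hμ' hu hg, ?_, ?_⟩
    · intro v hv
      rcases mem_sdiff.1 hv with ⟨hv1, hv2⟩
      exact mem_sdiff.2 ⟨AA_claim1 hμ hμ' hu hg v hv1 hv2, hv2⟩
    · ext v; simp only [hKf, mem_filter, mem_inter, mem_matchedSet]; tauto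
    · ext v; simp only [hKf', mem_filter, mem_inter, mem_matchedSet]; tauto
  have hkeyg : ∀ g u, u ∈ A → μ u = some g →
      c' g + (Kf (some g)).card ≤ (Kf' (some g)).card + (matchedSet μ g).card := by
    intro g u hu hg
    obtain ⟨hsub, hfull', hKeq, hK'eq⟩ := perb g u hu hg
    have e1 : (Kf' (some g)).card + (matchedSet μ' g \ A).card = c' g := by
      rw [hK'eq]
      have := card_inter_add_card_sdiff (matchedSet μ' g) A
      omega
    have e2 : (Kf (some g)).card + (matchedSet μ g \ A).card = (matchedSet μ g).card := by
      rw [hKeq]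
      exact card_inter_add_card_sdiff (matchedSet μ g) A
    have hle := card_le_card hsub
    omega
  -- sums
  set cc : Option F → ℕ := fun b => b.elim 0 c' with hcc
  set dd : Option F → ℕ := fun b => b.elim 0 J.cap with hdd
  have hkey : ∀ b ∈ B, cc b + (Kf b).card ≤ (Kf' b).card + dd b := by
    intro b hb
    obtain ⟨g, u, rfl, hu, hg⟩ := hBsome b hb
    have h1 := hkeyg g u hu hg
    have h2 : (matchedSet μ g).card ≤ J.cap g := hμ.1 g
    simpa [hcc, hdd] using by omega
  have hddcc : ∀ b ∈ B, dd b ≤ cc b := by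
    intro b hb
    obtain ⟨g, u, rfl, hu, hg⟩ := hBsome b hb
    simpa [hcc, hdd] using hcap g
  have hsums : ∑ b ∈ B, cc b + ∑ b ∈ B, (Kf b).card ≤
      ∑ b ∈ B, (Kf' b).card + ∑ b ∈ B, dd b := by
    have := Finset.sum_le_sum hkey
    rwa [Finset.sum_add_distrib, Finset.sum_add_distrib] at this
  have hKsum : ∑ b ∈ B, (Kf' b).card ≤ ∑ b ∈ B, (Kf b).card := by
    rw [← hcard1, ← hcard2]; exact hs'le
  have hccdd : ∀ b ∈ B, cc b = dd b := by
    intro b hb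
    by_contra hne
    have hlt : dd b < cc b := lt_of_le_of_ne (hddcc b hb) (Ne.symm hne)
    have : ∑ b ∈ B, dd b < ∑ b ∈ B, cc b :=
      Finset.sum_lt_sum hddcc ⟨b, hb, hlt⟩
    omega
  have hccddsum : ∑ b ∈ B, cc b = ∑ b ∈ B, dd b := Finset.sum_congr rfl hccdd
  have hKK : ∀ b ∈ B, (Kf b).card ≤ (Kf' b).card := by
    intro b hb
    have := hkey b hb
    have := hccdd b hb
    omega
  have hKKeq : ∀ b ∈ B, (Kf' b).card = (Kf b).card := by
    intro b hb
    by_contra hne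
    have hlt : (Kf b).card < (Kf' b).card := lt_of_le_of_ne (hKK b hb) (Ne.symm hne)
    have : ∑ b ∈ B, (Kf b).card < ∑ b ∈ B, (Kf' b).card :=
      Finset.sum_lt_sum hKK ⟨b, hb, hlt⟩
    omega
  have hs'eq : s' = A := by
    have h5 : s'.card = A.card := by
      rw [hcard2, hcard1]; exact Finset.sum_congr rfl hKKeq
    exact Finset.eq_of_subset_of_card_le (filter_subset _ _) h5.ge
  -- assemble
  have hcapEq : ∀ g u, u ∈ A → μ u = some g → c' g = J.cap g := by
    intro g u hu hg
    have := hccdd (some g) (hg ▸ hmemB u hu)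
    simpa [hcc, hdd] using this
  have hfullμ : ∀ g u, u ∈ A → μ u = some g → (matchedSet μ g).card = J.cap g := by
    intro g u hu hg
    have hb : (some g) ∈ B := hg ▸ hmemB u hu
    have h1 := hkeyg g u hu hg
    have h2 := hKKeq (some g) hb
    have h3 := hcapEq g u hu hg
    have h4 : (matchedSet μ g).card ≤ J.cap g := hμ.1 g
    omega
  constructor
  · exact AA_matched (c' := c') hμ'
  · exact hcapEq
  · exact hfullμ
  · intro g u hu hg
    rw [AA_full' hμ hμ' hu hg]
    exact hcapEq g u hu hg
  · intro g u hu hg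
    obtain ⟨hsub, hfull', hKeq, hK'eq⟩ := perb g u hu hg
    apply Finset.eq_of_subset_of_card_le hsub
    have hb : (some g) ∈ B := hg ▸ hmemB u hu
    have h2 := hKKeq (some g) hb
    have e1 : (Kf' (some g)).card + (matchedSet μ' g \ A).card = (matchedSet μ' g).card := by
      rw [hK'eq]
      exact card_inter_add_card_sdiff _ _
    have e2 : (Kf (some g)).card + (matchedSet μ g \ A).card = (matchedSet μ g).card := by
      rw [hKeq]
      exact card_inter_add_card_sdiff _ _
    have h3 := hfullμ g u hu hg
    have h4 := hcapEq g u hu hg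
    omega
  · intro u hu
    have hu' : u ∈ s' := hs'eq ▸ hu
    have hb : μ' u ∈ B := (mem_filter.1 hu').2
    obtain ⟨g, u₁, hbg, hu₁, hg₁⟩ := hBsome _ hb
    exact ⟨g, u₁, hbg ▸ rfl, hu₁, hg₁⟩

end Core2

end CapHelper

namespace CapHelper

open Finset

section Chains

variable {F W : Type} [DecidableEq W] [DecidableEq F] [Fintype W]

/-- Adding acceptable workers improves a set. -/
lemma flt_add_chain (K : MTO F W) (g : F) :
    ∀ (n : ℕ) (S T : Finset W), (T \ S).card = n → S ⊆ T → S ≠ T →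
      (∀ x ∈ T, x ∉ S → K.flt1 g (some x) none) → K.flt g T S := by
  intro n
  induction n with
  | zero =>
    intro S T hc hST hne _
    exact absurd (Finset.Subset.antisymm hST (sdiff_eq_empty_iff_subset.1
      (card_eq_zero.1 hc))) hne
  | succ n ih =>
    intro S T hc hST hne hacc
    have hx : ∃ x, x ∈ T \ S := Finset.card_pos.1 (by omega) |>.imp (fun x h => h)
    obtain ⟨x, hxTS⟩ := hx
    obtain ⟨hxT, hxS⟩ := mem_sdiff.1 hxTS
    have hstep : K.flt g (insert x S) S := (K.resp_add g S x hxS).2 (hacc x hxT hxS)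
    by_cases hS₁ : insert x S = T
    · rw [← hS₁]; exact hstep
    · refine K.flt_trans g T (insert x S) S ?_ hstep
      refine ih (insert x S) T ?_ (insert_subset hxT hST) hS₁ ?_
      · rw [Finset.sdiff_insert, card_erase_of_mem hxTS, hc]
        omega
      · intro y hyT hyS
        exact hacc y hyT (fun h => hyS (mem_insert_of_mem h))

/-- Swapping in better workers (plus adding acceptable ones) improves a set. -/
lemma flt_master (K : MTO F W) (g : F) :
    ∀ (n : ℕ) (S T : Finset W), (S \ T).card = n → S ≠ T →
      (S \ T).card ≤ (T \ S).card →
      (∀ x ∈ T, x ∉ S → K.flt1 g (some x) none) →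
      (∀ x ∈ T, x ∉ S → ∀ y ∈ S, y ∉ T → K.flt1 g (some x) (some y)) →
      K.flt g T S := by
  intro n
  induction n with
  | zero =>
    intro S T hc hne _ hacc _
    exact flt_add_chain K g (T \ S).card S T rfl
      (sdiff_eq_empty_iff_subset.1 (card_eq_zero.1 hc)) hne hacc
  | succ n ih =>
    intro S T hc hne hle hacc hsw
    obtain ⟨y, hyST⟩ := Finset.card_pos.1 (show 0 < (S \ T).card by omega)
    obtain ⟨hyS, hyT⟩ := mem_sdiff.1 hyST
    obtain ⟨x, hxTS⟩ := Finset.card_pos.1 (show 0 < (T \ S).card by omega)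
    obtain ⟨hxT, hxS⟩ := mem_sdiff.1 hxTS
    have hxy : x ≠ y := fun h => hxS (h ▸ hyS)
    have hxe : x ∉ S.erase y := fun h => hxS (mem_of_mem_erase h)
    have h1 : K.flt g (insert x (S.erase y)) S := by
      have := (K.resp_swap g (S.erase y) x y hxe (notMem_erase _ _) hxy).2
        (hsw x hxT hxS y hyS hyT)
      rwa [insert_erase hyS] at this
    by_cases hS₁ : insert x (S.erase y) = T
    · rw [← hS₁]; exact h1
    · refine K.flt_trans g T (insert x (S.erase y)) S ?_ h1
      have hsd1 : insert x (S.erase y) \ T = (S \ T).erase y := by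
        rw [Finset.insert_sdiff_of_mem _ hxT]
        ext a
        simp only [mem_sdiff, mem_erase]
        tauto
      have hsd2 : T \ insert x (S.erase y) = (T \ S).erase x := by
        ext a
        simp only [mem_sdiff, mem_erase, mem_insert]
        constructor
        · rintro ⟨haT, ha2⟩
          refine ⟨fun h => ha2 (Or.inl h), haT, fun haS => ?_⟩
          have hay : a ≠ y := fun h => hyT (h ▸ haT)
          exact ha2 (Or.inr ⟨hay, haS⟩)
        · rintro ⟨hax, haT, haS⟩
          refine ⟨haT, fun h => ?_⟩
          rcases h with h | ⟨_, h⟩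
          · exact hax h
          · exact haS h
      refine ih (insert x (S.erase y)) T ?_ hS₁ ?_ ?_ ?_
      · rw [hsd1, card_erase_of_mem hyST, hc]
        omega
      · rw [hsd1, hsd2, card_erase_of_mem hyST, card_erase_of_mem hxTS, hc]
        omega
      · intro a haT haS₁
        have haS : a ∉ S := by
          intro haS
          have hay : a ≠ y := fun h => hyT (h ▸ haT)
          exact haS₁ (mem_insert_of_mem (mem_erase.2 ⟨hay, haS⟩))
        exact hacc a haT haS
      · intro a haT haS₁ b hbS₁ hbT
        have haS : a ∉ S := by
          intro haS
          have hay : a ≠ y := fun h => hyT (h ▸ haT)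
          exact haS₁ (mem_insert_of_mem (mem_erase.2 ⟨hay, haS⟩))
        have hbS : b ∈ S := by
          rcases mem_insert.1 hbS₁ with h | h
          · exact absurd (h ▸ hxT) hbT
          · exact mem_of_mem_erase h
        exact hsw a haT haS b hbS hbT

end Chains

end CapHelper

namespace CapHelper
set_option linter.unusedSectionVars false

open Finset

section Core3

variable {F W : Type} [DecidableEq W] [DecidableEq F] [Fintype W]
variable {J : MTO F W} {c' : F → ℕ} {μ μ' : W → Option F}

lemma ms_meet_B (cf : CoreFacts J c' μ μ') {g : F} {u : W}
    (hu : u ∈ AAset J μ μ') (hg : μ u = some g) :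
    matchedSet (meetM J μ μ') g = matchedSet μ' g := by
  ext w
  simp only [mem_matchedSet, meetM]
  by_cases hw : w ∈ AAset J μ μ'
  · rw [if_pos hw]
  · rw [if_neg hw]
    constructor
    · intro h
      have hmem : w ∈ matchedSet μ g \ AAset J μ μ' :=
        mem_sdiff.2 ⟨mem_matchedSet.2 h, hw⟩
      rw [← cf.sdiffEq g u hu hg] at hmem
      exact mem_matchedSet.1 (mem_sdiff.1 hmem).1
    · intro h
      have hmem : w ∈ matchedSet μ' g \ AAset J μ μ' :=
        mem_sdiff.2 ⟨mem_matchedSet.2 h, hw⟩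
      rw [cf.sdiffEq g u hu hg] at hmem
      exact mem_matchedSet.1 (mem_sdiff.1 hmem).1

lemma ms_join_B (cf : CoreFacts J c' μ μ') {g : F} {u : W}
    (hu : u ∈ AAset J μ μ') (hg : μ u = some g) :
    matchedSet (joinM J μ μ') g = matchedSet μ g := by
  ext w
  simp only [mem_matchedSet, joinM]
  by_cases hw : w ∈ AAset J μ μ'
  · rw [if_pos hw]
  · rw [if_neg hw]
    constructor
    · intro h
      have hmem : w ∈ matchedSet μ' g \ AAset J μ μ' :=
        mem_sdiff.2 ⟨mem_matchedSet.2 h, hw⟩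
      rw [cf.sdiffEq g u hu hg] at hmem
      exact mem_matchedSet.1 (mem_sdiff.1 hmem).1
    · intro h
      have hmem : w ∈ matchedSet μ g \ AAset J μ μ' :=
        mem_sdiff.2 ⟨mem_matchedSet.2 h, hw⟩
      rw [← cf.sdiffEq g u hu hg] at hmem
      exact mem_matchedSet.1 (mem_sdiff.1 hmem).1

lemma notB_ne' (cf : CoreFacts J c' μ μ') {g : F}
    (hng : ∀ u ∈ AAset J μ μ', μ u ≠ some g) :
    ∀ w ∈ AAset J μ μ', μ' w ≠ some g := by
  intro w hw h
  obtain ⟨g', u₁, hg', hu₁, hgu₁⟩ := cf.matched' w hw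
  rw [h] at hg'
  have : g' = g := by injection hg'.symm
  exact hng u₁ hu₁ (this ▸ hgu₁)

lemma ms_meet_nB (cf : CoreFacts J c' μ μ') {g : F}
    (hng : ∀ u ∈ AAset J μ μ', μ u ≠ some g) :
    matchedSet (meetM J μ μ') g = matchedSet μ g := by
  ext w
  simp only [mem_matchedSet, meetM]
  by_cases hw : w ∈ AAset J μ μ'
  · rw [if_pos hw]
    constructor
    · intro h; exact absurd h (notB_ne' cf hng w hw)
    · intro h; exact absurd h (hng w hw)
  · rw [if_neg hw]

lemma ms_join_nB (cf : CoreFacts J c' μ μ') {g : F}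
    (hng : ∀ u ∈ AAset J μ μ', μ u ≠ some g) :
    matchedSet (joinM J μ μ') g = matchedSet μ' g := by
  ext w
  simp only [mem_matchedSet, joinM]
  by_cases hw : w ∈ AAset J μ μ'
  · rw [if_pos hw]
    constructor
    · intro h; exact absurd h (hng w hw)
    · intro h; exact absurd h (notB_ne' cf hng w hw)
  · rw [if_neg hw]

end Core3

end CapHelper

namespace CapHelper
set_option linter.unusedSectionVars false

open Finset

section Core4

variable {F W : Type} [DecidableEq W] [DecidableEq F] [Fintype W]
variable {J : MTO F W} {c' : F → ℕ} {μ μ' : W → Option F}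

lemma join_stable (hcap : ∀ g, J.cap g ≤ c' g) (hμ : J.isStable μ)
    (hμ' : (bump J c').isStable μ') (cf : CoreFacts J c' μ μ') :
    (bump J c').isStable (joinM J μ μ') := by
  classical
  have hms : ∀ g : F, (∃ u ∈ AAset J μ μ', μ u = some g) ∨
      (∀ u ∈ AAset J μ μ', μ u ≠ some g) := by
    intro g
    by_cases h : ∃ u ∈ AAset J μ μ', μ u = some g
    · exact Or.inl h
    · push_neg at h; exact Or.inr h
  refine ⟨?_, ⟨?_, ?_⟩, ?_⟩
  · intro g
    rcases hms g with ⟨u, hu, hg⟩ | hng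
    · rw [ms_join_B cf hu hg, cf.fullμ g u hu hg]
      exact hcap g
    · rw [ms_join_nB cf hng]
      exact hμ'.1 g
  · intro w g h
    by_cases hw : w ∈ AAset J μ μ'
    · have h2 : μ w = some g := by simpa [joinM, hw] using h
      exact hμ.2.1.1 w g h2
    · have h2 : μ' w = some g := by simpa [joinM, hw] using h
      exact hμ'.2.1.1 w g h2
  · intro w g h
    by_cases hw : w ∈ AAset J μ μ'
    · have h2 : μ w = some g := by simpa [joinM, hw] using h
      exact hμ.2.1.2 w g h2
    · have h2 : μ' w = some g := by simpa [joinM, hw] using h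
      exact hμ'.2.1.2 w g h2
  · rintro w g ⟨hwant, S, hS, hcard, hflt⟩
    have hwboth : J.wlt w (some g) (μ w) ∧ J.wlt w (some g) (μ' w) := by
      by_cases hw : w ∈ AAset J μ μ'
      · have hww : joinM J μ μ' w = μ w := by simp [joinM, hw]
        rw [hww] at hwant
        exact ⟨hwant, J.wlt_trans w _ _ _ hwant (mem_AAset.1 hw)⟩
      · have hww : joinM J μ μ' w = μ' w := by simp [joinM, hw]
        rw [hww] at hwant
        refine ⟨?_, hwant⟩
        rcases J.wlt_trichot w (μ w) (μ' w) with he | hlt | hgt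
        · rw [he]; exact hwant
        · exact absurd (mem_AAset.2 hlt) hw
        · exact J.wlt_trans w _ _ _ hwant hgt
    rcases hms g with ⟨u, hu, hg⟩ | hng
    · apply hμ.2.2 w g
      rw [ms_join_B cf hu hg] at hS hflt
      refine ⟨hwboth.1, S, hS, ?_, hflt⟩
      calc (insert w S).card ≤ c' g := hcard
        _ = J.cap g := cf.capEq g u hu hg
    · apply hμ'.2.2 w g
      rw [ms_join_nB cf hng] at hS hflt
      exact ⟨hwboth.2, S, hS, hcard, hflt⟩

lemma noWorse_W (hcap : ∀ g, J.cap g ≤ c' g) (hμ : J.isStable μ)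
    (hW' : (bump J c').workerOptimal μ') :
    ∀ w, ¬ J.wlt w (μ w) (μ' w) := by
  intro w hw
  have hμ' := hW'.1
  have cf := core_facts hcap hμ hμ'
  have hν := join_stable hcap hμ hμ' cf
  have h := hW'.2 _ hν w
  have hνw : joinM J μ μ' w = μ w := by simp [joinM, mem_AAset.2 hw]
  rcases h with h | h
  · rw [hνw] at h
    rw [h] at hw
    exact J.wlt_irrefl w _ hw
  · rw [hνw] at h
    exact J.wlt_irrefl w _ (J.wlt_trans w _ _ _ hw h)

end Core4

end CapHelper

namespace CapHelper
set_option linter.unusedSectionVars false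

open Finset

section Core5

variable {F W : Type} [DecidableEq W] [DecidableEq F] [Fintype W]

/-- If every member of `T` beats `w` (and is acceptable), `T` beats any coalition
`insert w S` with `S ⊆ T` of size at most `|T|`. -/
lemma master_beat (K : MTO F W) {g : F} {T S : Finset W} {w : W}
    (hS : S ⊆ T) (hwT : w ∉ T)
    (hcard : (insert w S).card ≤ T.card)
    (hacc : ∀ x ∈ T, K.flt1 g (some x) none)
    (hbeat : ∀ x ∈ T, K.flt1 g (some x) (some w)) :
    K.flt g T (insert w S) := by
  have hwS : w ∉ S := fun h => hwT (hS h)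
  have hsd1 : insert w S \ T = {w} := by
    ext a
    simp only [mem_sdiff, mem_insert, mem_singleton]
    constructor
    · rintro ⟨h1 | h1, h2⟩
      · exact h1
      · exact absurd (hS h1) h2
    · rintro rfl
      exact ⟨Or.inl rfl, hwT⟩
  have hsd2 : T \ insert w S = T \ S := by
    ext a
    simp only [mem_sdiff, mem_insert]
    constructor
    · rintro ⟨h1, h2⟩
      exact ⟨h1, fun h => h2 (Or.inr h)⟩
    · rintro ⟨h1, h2⟩
      refine ⟨h1, fun h => ?_⟩
      rcases h with rfl | h
      · exact hwT h1
      · exact h2 h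
  refine flt_master K g 1 (insert w S) T ?_ ?_ ?_ ?_ ?_
  · rw [hsd1, card_singleton]
  · intro h
    exact hwT (h ▸ mem_insert_self w S)
  · rw [hsd1, hsd2, card_singleton, card_sdiff_of_subset hS]
    rw [card_insert_of_notMem hwS] at hcard
    have := card_le_card hS
    omega
  · intro x hx _
    exact hacc x hx
  · intro x hx _ y hy hyT
    rcases mem_insert.1 hy with rfl | h
    · exact hbeat x hx
    · exact absurd (hS h) hyT

variable {J : MTO F W} {c' : F → ℕ} {μ μ' : W → Option F}

lemma meet_stable (hcap : ∀ g, J.cap g ≤ c' g) (hμ : J.isStable μ)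
    (hμ' : (bump J c').isStable μ') (cf : CoreFacts J c' μ μ') :
    J.isStable (meetM J μ μ') := by
  classical
  have hms : ∀ g : F, (∃ u ∈ AAset J μ μ', μ u = some g) ∨
      (∀ u ∈ AAset J μ μ', μ u ≠ some g) := by
    intro g
    by_cases h : ∃ u ∈ AAset J μ μ', μ u = some g
    · exact Or.inl h
    · push_neg at h; exact Or.inr h
  refine ⟨?_, ⟨?_, ?_⟩, ?_⟩
  · intro g
    rcases hms g with ⟨u, hu, hg⟩ | hng
    · rw [ms_meet_B cf hu hg, cf.fullμ' g u hu hg]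
    · rw [ms_meet_nB cf hng]
      exact hμ.1 g
  · intro w g h
    by_cases hw : w ∈ AAset J μ μ'
    · have h2 : μ' w = some g := by simpa [meetM, hw] using h
      exact hμ'.2.1.1 w g h2
    · have h2 : μ w = some g := by simpa [meetM, hw] using h
      exact hμ.2.1.1 w g h2
  · intro w g h
    by_cases hw : w ∈ AAset J μ μ'
    · have h2 : μ' w = some g := by simpa [meetM, hw] using h
      exact hμ'.2.1.2 w g h2
    · have h2 : μ w = some g := by simpa [meetM, hw] using h
      exact hμ.2.1.2 w g h2
  · rintro w g ⟨hwant, S, hS, hcard, hflt⟩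
    rcases hms g with ⟨u, hu, hg⟩ | hng
    -- g ∈ B : the meet assigns M'_g to g
    · rw [ms_meet_B cf hu hg] at hS hflt
      by_cases h1 : J.wlt w (some g) (μ' w)
      · apply hμ'.2.2 w g
        refine ⟨h1, S, hS, ?_, hflt⟩
        calc (insert w S).card ≤ J.cap g := hcard
          _ = c' g := (cf.capEq g u hu hg).symm
      · -- w is not in A, holds μ w, and everyone in M'_g beats w
        have hw : w ∉ AAset J μ μ' := by
          intro hw
          have hww : meetM J μ μ' w = μ' w := by simp [meetM, hw]
          rw [hww] at hwant
          exact h1 hwant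
        have hwμ : J.wlt w (some g) (μ w) := by
          have hww : meetM J μ μ' w = μ w := by simp [meetM, hw]
          rwa [hww] at hwant
        have hwM : w ∉ matchedSet μ g := fun h =>
          not_matched_of_want hwμ (mem_matchedSet.1 h)
        have hwM' : w ∉ matchedSet μ' g := by
          intro h
          have : w ∈ matchedSet μ g \ AAset J μ μ' := by
            rw [← cf.sdiffEq g u hu hg]
            exact mem_sdiff.2 ⟨h, hw⟩
          exact hwM (mem_sdiff.1 this).1
        have hbeat : ∀ x ∈ matchedSet μ' g, J.flt1 g (some x) (some w) := by
          intro x hx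
          exact J.flt1_trans g _ _ _ (AA_all_better hμ' hu hg x hx)
            (all_better hμ hwμ u (mem_matchedSet.2 hg))
        have hchain : J.flt g (matchedSet μ' g) (insert w S) := by
          refine master_beat J hS hwM' ?_ ?_ hbeat
          · rw [cf.fullμ' g u hu hg]
            exact hcard
          · intro x hx
            exact acceptable_of_matched (K := bump J c') hμ' (mem_matchedSet.1 hx)
        exact flt_asymm hflt hchain
    -- g ∉ B : the meet assigns M_g to g
    · rw [ms_meet_nB cf hng] at hS hflt
      by_cases hw : w ∈ AAset J μ μ'
      · have h1 : J.wlt w (some g) (μ' w) := by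
          have hww : meetM J μ μ' w = μ' w := by simp [meetM, hw]
          rwa [hww] at hwant
        by_cases hwμ : J.wlt w (some g) (μ w)
        · exact hμ.2.2 w g ⟨hwμ, S, hS, hcard, hflt⟩
        · have hwM : w ∉ matchedSet μ g := fun h => hng w hw (mem_matchedSet.1 h)
          have hwS : w ∉ S := fun h => hwM (hS h)
          have hall' : ∀ x ∈ matchedSet μ' g, J.flt1 g (some x) (some w) :=
            all_better (K := bump J c') hμ' h1
          by_cases hV : (matchedSet μ' g \ matchedSet μ g).Nonempty
          · obtain ⟨v, hv⟩ := hV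
            obtain ⟨hv1, hv2⟩ := mem_sdiff.1 hv
            have hv1' : μ' v = some g := mem_matchedSet.1 hv1
            have hvA : v ∉ AAset J μ μ' := fun h => notB_ne' cf hng v h hv1'
            have hvwant : J.wlt v (some g) (μ v) := by
              rcases J.wlt_trichot v (μ v) (μ' v) with he | hlt | hgt
              · rw [hv1'] at he
                exact absurd (mem_matchedSet.2 he) hv2
              · exact absurd (mem_AAset.2 hlt) hvA
              · rwa [hv1'] at hgt
            have hallM : ∀ x ∈ matchedSet μ g, J.flt1 g (some x) (some v) :=
              all_better hμ hvwant
            have hfullM : (matchedSet μ g).card = J.cap g :=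
              firm_full hμ hvwant (acceptable_of_matched (K := bump J c') hμ' hv1')
            have hMw : ∀ x ∈ matchedSet μ g, J.flt1 g (some x) (some w) :=
              fun x hx => J.flt1_trans g _ _ _ (hallM x hx) (hall' v hv1)
            have hchain : J.flt g (matchedSet μ g) (insert w S) := by
              refine master_beat J hS hwM ?_ ?_ hMw
              · rw [hfullM]
                exact hcard
              · intro x hx
                exact acceptable_of_matched hμ (mem_matchedSet.1 hx)
            exact flt_asymm hflt hchain
          · have hsub : matchedSet μ' g ⊆ matchedSet μ g := by
              intro a ha
              by_contra h
              exact hV ⟨a, mem_sdiff.2 ⟨ha, h⟩⟩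
            by_cases hacc : J.flt1 g (some w) none
            · have hfull' : (matchedSet μ' g).card = c' g :=
                firm_full (K := bump J c') hμ' h1 hacc
              have hMeq : matchedSet μ' g = matchedSet μ g := by
                apply Finset.eq_of_subset_of_card_le hsub
                have h3 := hμ.1 g
                have h4 := hcap g
                omega
              apply hμ'.2.2 w g
              refine ⟨h1, S, hMeq ▸ hS, ?_, hMeq ▸ hflt⟩
              show (insert w S).card ≤ c' g
              have h4 := hcap g
              omega
            · have hunacc : J.flt1 g none (some w) := by
                rcases J.flt1_trichot g (some w) none with he | h | h
                · exact absurd he (by simp)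
                · exact absurd h hacc
                · exact h
              by_cases hSM : S = matchedSet μ g
              · rw [hSM] at hflt hwS
                exact hacc ((J.resp_add g (matchedSet μ g) w hwS).1 hflt)
              · have hchain : J.flt g (matchedSet μ g) S :=
                  flt_add_chain J g _ S (matchedSet μ g) rfl hS hSM
                    (fun x hx _ => acceptable_of_matched hμ (mem_matchedSet.1 hx))
                have htrans : J.flt g (insert w S) S :=
                  J.flt_trans g _ _ _ hflt hchain
                exact hacc ((J.resp_add g S w hwS).1 htrans)
      · have hwμ : J.wlt w (some g) (μ w) := by
          have hww : meetM J μ μ' w = μ w := by simp [meetM, hw]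
          rwa [hww] at hwant
        exact hμ.2.2 w g ⟨hwμ, S, hS, hcard, hflt⟩

end Core5

end CapHelper

namespace CapHelper
set_option linter.unusedSectionVars false

open Finset

section Core6

variable {F W : Type} [DecidableEq W] [DecidableEq F] [Fintype W]
variable {J : MTO F W} {c' : F → ℕ} {μ μ' : W → Option F}

lemma flt_B (hμ : J.isStable μ) (hμ' : (bump J c').isStable μ')
    (cf : CoreFacts J c' μ μ') {g : F} {u : W}
    (hu : u ∈ AAset J μ μ') (hg : μ u = some g) :
    J.flt g (matchedSet μ' g) (matchedSet μ g) ∧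
      matchedSet μ' g ≠ matchedSet μ g := by
  have huM : u ∈ matchedSet μ g := mem_matchedSet.2 hg
  have huM' : u ∉ matchedSet μ' g := by
    intro h
    have h2 := mem_AAset.1 hu
    rw [hg, mem_matchedSet.1 h] at h2
    exact J.wlt_irrefl u _ h2
  have hne : matchedSet μ' g ≠ matchedSet μ g := by
    intro h
    rw [← h] at huM
    exact huM' huM
  have hMsub : ∀ y ∈ matchedSet μ g, y ∉ matchedSet μ' g → y ∈ AAset J μ μ' := by
    intro y hy hy'
    by_contra hyA
    have h2 : y ∈ matchedSet μ g \ AAset J μ μ' := mem_sdiff.2 ⟨hy, hyA⟩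
    rw [← cf.sdiffEq g u hu hg] at h2
    exact hy' (mem_sdiff.1 h2).1
  refine ⟨?_, hne⟩
  refine flt_master J g _ (matchedSet μ g) (matchedSet μ' g) rfl hne.symm ?_ ?_ ?_
  · have h1 := cf.fullμ g u hu hg
    have h2 := cf.fullμ' g u hu hg
    have e1 := card_sdiff_add_card_inter (matchedSet μ g) (matchedSet μ' g)
    have e2 := card_sdiff_add_card_inter (matchedSet μ' g) (matchedSet μ g)
    rw [inter_comm] at e2
    omega
  · intro x hx _
    exact acceptable_of_matched (K := bump J c') hμ' (mem_matchedSet.1 hx)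
  · intro x hx _ y hy hyM'
    exact AA_all_better hμ' (hMsub y hy hyM') (mem_matchedSet.1 hy) x hx

lemma noWorse_F (hcap : ∀ g, J.cap g ≤ c' g) (hF : J.firmOptimal μ)
    (hμ' : (bump J c').isStable μ') :
    ∀ w, ¬ J.wlt w (μ w) (μ' w) := by
  intro w hw
  have hμ := hF.1
  have cf := core_facts hcap hμ hμ'
  have hu : w ∈ AAset J μ μ' := mem_AAset.2 hw
  obtain ⟨g, hg⟩ := cf.matched w hu
  have hmeet := meet_stable hcap hμ hμ' cf
  have h := hF.2 _ hmeet g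
  rw [ms_meet_B cf hu hg] at h
  obtain ⟨hfB, hneB⟩ := flt_B hμ hμ' cf hu hg
  rcases h with h | h
  · exact hneB h
  · exact flt_asymm h hfB

lemma ms_compare (hcap : ∀ g, J.cap g ≤ c' g) (hμ : J.isStable μ)
    (hμ' : (bump J c').isStable μ')
    (hA : ∀ w, ¬ J.wlt w (μ w) (μ' w)) {g : F} (hgcap : c' g = J.cap g) :
    matchedSet μ' g = matchedSet μ g ∨
      J.flt g (matchedSet μ g) (matchedSet μ' g) := by
  classical
  have hwantv : ∀ v ∈ matchedSet μ' g, v ∉ matchedSet μ g →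
      J.wlt v (some g) (μ v) := by
    intro v hv hv2
    have hv1 : μ' v = some g := mem_matchedSet.1 hv
    rcases J.wlt_trichot v (μ v) (μ' v) with he | hlt | hgt
    · rw [hv1] at he
      exact absurd (mem_matchedSet.2 he) hv2
    · exact absurd hlt (hA v)
    · rwa [hv1] at hgt
  by_cases hV : (matchedSet μ' g \ matchedSet μ g).Nonempty
  · obtain ⟨v, hv⟩ := hV
    obtain ⟨hv1, hv2⟩ := mem_sdiff.1 hv
    have hfull : (matchedSet μ g).card = J.cap g :=
      firm_full hμ (hwantv v hv1 hv2)
        (acceptable_of_matched (K := bump J c') hμ' (mem_matchedSet.1 hv1))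
    right
    refine flt_master J g _ (matchedSet μ' g) (matchedSet μ g) rfl ?_ ?_ ?_ ?_
    · intro h
      rw [h] at hv1
      exact hv2 hv1
    · have h1 : (matchedSet μ' g).card ≤ c' g := hμ'.1 g
      have e1 := card_sdiff_add_card_inter (matchedSet μ' g) (matchedSet μ g)
      have e2 := card_sdiff_add_card_inter (matchedSet μ g) (matchedSet μ' g)
      rw [inter_comm] at e2
      omega
    · intro x hx _
      exact acceptable_of_matched hμ (mem_matchedSet.1 hx)
    · intro x hx _ y hy hyM
      exact all_better hμ (hwantv y hy hyM) x hx
  · have hsub : matchedSet μ' g ⊆ matchedSet μ g := by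
      intro a ha
      by_contra h
      exact hV ⟨a, mem_sdiff.2 ⟨ha, h⟩⟩
    by_cases heq : matchedSet μ' g = matchedSet μ g
    · exact Or.inl heq
    · right
      exact flt_add_chain J g _ _ _ rfl hsub heq
        (fun x hx _ => acceptable_of_matched hμ (mem_matchedSet.1 hx))

end Core6

end CapHelper

/-- When a firm `f` increases its capacity by one, every worker weakly improves
and every other firm weakly worsens, both under the worker-optimal and the
firm-optimal stable matchings. -/
theorem capacity_increase_workers_improve_other_firms_worsen
    {F W : Type} [DecidableEq W] [DecidableEq F] [Fintype W]
    (I : MTO F W) (f : F)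
    (μW μF μW' μF' : W → Option F)
    (hW : I.workerOptimal μW) (hF : I.firmOptimal μF)
    (hW' : (I.withCap f (I.cap f + 1)).workerOptimal μW')
    (hF' : (I.withCap f (I.cap f + 1)).firmOptimal μF') :
    (∀ w, μW' w = μW w ∨ I.wlt w (μW' w) (μW w)) ∧
    (∀ w, μF' w = μF w ∨ I.wlt w (μF' w) (μF w)) ∧
    (∀ f', f' ≠ f →
      (matchedSet μW' f' = matchedSet μW f' ∨
        I.flt f' (matchedSet μW f') (matchedSet μW' f')) ∧
      (matchedSet μF' f' = matchedSet μF f' ∨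
        I.flt f' (matchedSet μF f') (matchedSet μF' f'))) := by
    classical
  have hcap : ∀ g, I.cap g ≤ Function.update I.cap f (I.cap f + 1) g := by
    intro g
    by_cases hgf : g = f
    · subst hgf
      simp
    · rw [Function.update_of_ne hgf]
  have hW'b : (CapHelper.bump I (Function.update I.cap f (I.cap f + 1))).workerOptimal μW' := hW'
  have hF'b : (CapHelper.bump I (Function.update I.cap f (I.cap f + 1))).firmOptimal μF' := hF'
  have h1 : ∀ w, ¬ I.wlt w (μW w) (μW' w) := CapHelper.noWorse_W hcap hW.1 hW'b
  have h2 : ∀ w, ¬ I.wlt w (μF w) (μF' w) := CapHelper.noWorse_F hcap hF hF'b.1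
  refine ⟨?_, ?_, ?_⟩
  · intro w
    rcases I.wlt_trichot w (μW' w) (μW w) with he | h | h
    · exact Or.inl he
    · exact Or.inr h
    · exact absurd h (h1 w)
  · intro w
    rcases I.wlt_trichot w (μF' w) (μF w) with he | h | h
    · exact Or.inl he
    · exact Or.inr h
    · exact absurd h (h2 w)
  · intro f' hf'
    have hgcap : Function.update I.cap f (I.cap f + 1) f' = I.cap f' :=
      Function.update_of_ne hf' _ _
    exact ⟨CapHelper.ms_compare hcap hW.1 hW'b.1 h1 hgcap,
      CapHelper.ms_compare hcap hF.1 hF'b.1 h2 hgcap⟩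
end

section
/- If a firm's capacity is greater than or equal to its peak, then under the worker-proposing deferred acceptance algorithm the firm cannot improve its outcome by misreporting its preference list as any permutation of its acceptable workers: it is matched to the same set of workers as under truthful reporting. -/
variable {F W : Type} [DecidableEq W] [DecidableEq F] [Fintype W]

section Helpers
set_option linter.unusedSectionVars false

namespace MTO

variable {F W : Type} [DecidableEq W] [DecidableEq F] [Fintype W]

lemma wlt_asymm (I : MTO F W) (w : W) {a b : Option F} (h : I.wlt w a b) : ¬ I.wlt w b a :=
  fun h' => I.wlt_irrefl w a (I.wlt_trans w a b a h h')

lemma flt1_asymm (I : MTO F W) (f : F) {a b : Option W} (h : I.flt1 f a b) : ¬ I.flt1 f b a :=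
  fun h' => I.flt1_irrefl f a (I.flt1_trans f a b a h h')

lemma flt1_some_none (I : MTO F W) (f : F) (w : W) (h : ¬ I.flt1 f none (some w)) :
    I.flt1 f (some w) none := by
  rcases I.flt1_trichot f (some w) none with h1 | h1 | h1
  · simp at h1
  · exact h1
  · exact absurd h1 h

lemma flt1_total (I : MTO F W) (f : F) {v t : W} (h : ¬ I.flt1 f (some v) (some t))
    (hne : v ≠ t) : I.flt1 f (some t) (some v) := by
  rcases I.flt1_trichot f (some v) (some t) with h1 | h1 | h1
  · exact absurd (Option.some_injective _ h1) hne
  · exact absurd h1 h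
  · exact h1

lemma mem_matchedSet {μ : W → Option F} {f : F} {w : W} :
    w ∈ matchedSet μ f ↔ μ w = some f := by simp [matchedSet]

lemma matched_acc (I : MTO F W) {μ : W → Option F} (hIR : I.indivRational μ) (f : F) :
    ∀ t ∈ matchedSet μ f, I.flt1 f (some t) none :=
  fun t ht => I.flt1_some_none f t (hIR.2 t f (mem_matchedSet.mp ht))

lemma notMem_matchedSet_of_wlt (I : MTO F W) {μ : W → Option F} {f : F} {w : W}
    (h : I.wlt w (some f) (μ w)) : w ∉ matchedSet μ f := fun hm =>
  I.wlt_irrefl w (some f) (by rw [mem_matchedSet.mp hm] at h; exact h)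

lemma flt_superset (I : MTO F W) (f : F) {T : Finset W}
    (hT : ∀ t ∈ T, I.flt1 f (some t) none) :
    ∀ (S : Finset W), S ⊆ T → S ≠ T → I.flt f T S := by
  suffices h : ∀ (n : ℕ) (S : Finset W), (T \ S).card ≤ n → S ⊆ T → S ≠ T → I.flt f T S from
    fun S hS hne => h _ S le_rfl hS hne
  intro n
  induction n with
  | zero =>
    intro S hc hS hne
    exfalso
    have : T \ S = ∅ := Finset.card_eq_zero.mp (Nat.le_zero.mp hc)
    exact hne (Finset.Subset.antisymm hS (fun t ht => by
      by_contra hts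
      exact (Finset.notMem_empty t) (this ▸ Finset.mem_sdiff.mpr ⟨ht, hts⟩)))
  | succ n IH =>
    intro S hc hS hne
    obtain ⟨t, ht⟩ : (T \ S).Nonempty := by
      rw [Finset.sdiff_nonempty]
      exact fun h => hne (Finset.Subset.antisymm hS h)
    have htT : t ∈ T := (Finset.mem_sdiff.mp ht).1
    have htS : t ∉ S := (Finset.mem_sdiff.mp ht).2
    have h1 : I.flt f (insert t S) S := (I.resp_add f S t htS).mpr (hT t htT)
    by_cases he : insert t S = T
    · rwa [he] at h1
    · have hcard : (T \ insert t S).card ≤ n := by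
        rw [Finset.sdiff_insert, Finset.card_erase_of_mem ht]
        omega
      have h2 : I.flt f T (insert t S) :=
        IH (insert t S) hcard (Finset.insert_subset htT hS) he
      exact I.flt_trans f T (insert t S) S h2 h1

lemma flt1_of_block_superset (I : MTO F W) (f : F) {M S : Finset W} {w : W}
    (hM : ∀ t ∈ M, I.flt1 f (some t) none) (hw : w ∉ M) (hS : S ⊆ M)
    (hflt : I.flt f (insert w S) M) : I.flt1 f (some w) none := by
  have hwS : w ∉ S := fun h => hw (hS h)
  by_cases he : S = M
  · subst he; exact (I.resp_add f S w hwS).mp hflt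
  · exact (I.resp_add f S w hwS).mp
      (I.flt_trans f (insert w S) M S hflt (I.flt_superset f hM S hS he))

lemma exists_flt1_of_block_full (I : MTO F W) (f : F) {M S : Finset W} {v : W}
    (hM : ∀ t ∈ M, I.flt1 f (some t) none) (hv : v ∉ M) (hS : S ⊆ M)
    (hcard : (insert v S).card ≤ M.card) (hflt : I.flt f (insert v S) M) :
    ∃ t ∈ M, I.flt1 f (some v) (some t) := by
  by_contra hcon
  push_neg at hcon
  have hall : ∀ t ∈ M, I.flt1 f (some t) (some v) := fun t ht =>
    I.flt1_total f (hcon t ht) (fun h => hv (h ▸ ht))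
  have hvS : v ∉ S := fun h => hv (hS h)
  have hSM : S ≠ M := by
    intro h
    subst h
    rw [Finset.card_insert_of_notMem hvS] at hcard
    omega
  obtain ⟨t, ht⟩ : (M \ S).Nonempty := by
    rw [Finset.sdiff_nonempty]
    exact fun h => hSM (Finset.Subset.antisymm hS h)
  have htM : t ∈ M := (Finset.mem_sdiff.mp ht).1
  have htS : t ∉ S := (Finset.mem_sdiff.mp ht).2
  have htv : t ≠ v := fun h => hv (h ▸ htM)
  have h1 : I.flt f (insert t S) (insert v S) :=
    (I.resp_swap f S t v htS hvS htv).mpr (hall t htM)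
  by_cases he : insert t S = M
  · exact I.flt_irrefl f (insert v S)
      (I.flt_trans f _ _ _ hflt (he ▸ h1))
  · have h2 : I.flt f M (insert t S) :=
      I.flt_superset f hM (insert t S) (Finset.insert_subset htM hS) he
    exact I.flt_irrefl f (insert v S)
      (I.flt_trans f _ _ _ hflt (I.flt_trans f _ _ _ h2 h1))

lemma exists_flt1_max (I : MTO F W) (f : F) (s : Finset W) (hs : s.Nonempty) :
    ∃ m ∈ s, ∀ v ∈ s, v = m ∨ I.flt1 f (some m) (some v) := by
  classical
  induction s using Finset.induction_on with
  | empty => exact absurd hs (by simp)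
  | @insert a s ha IH =>
    by_cases hse : s.Nonempty
    · obtain ⟨m, hm, hmax⟩ := IH hse
      rcases I.flt1_trichot f (some a) (some m) with h | h | h
      · exact absurd (Option.some_injective _ h ▸ hm) ha
      · refine ⟨a, Finset.mem_insert_self a s, fun v hv => ?_⟩
        rcases Finset.mem_insert.mp hv with rfl | hvs
        · exact Or.inl rfl
        · rcases hmax v hvs with rfl | h2
          · exact Or.inr h
          · exact Or.inr (I.flt1_trans f _ _ _ h h2)
      · refine ⟨m, Finset.mem_insert_of_mem hm, fun v hv => ?_⟩
        rcases Finset.mem_insert.mp hv with rfl | hvs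
        · exact Or.inr h
        · exact hmax v hvs
    · rw [Finset.not_nonempty_iff_eq_empty.mp hse]
      exact ⟨a, by simp, fun v hv => by simp at hv; exact Or.inl hv⟩

lemma blocks_of_underfull (I : MTO F W) (μ : W → Option F) (w : W) (f : F)
    (h1 : I.wlt w (some f) (μ w)) (h2 : I.flt1 f (some w) none)
    (h3 : (matchedSet μ f).card < I.cap f) : I.blocks μ w f := by
  have hwM : w ∉ matchedSet μ f := I.notMem_matchedSet_of_wlt h1
  refine ⟨h1, matchedSet μ f, Finset.Subset.refl _, ?_, (I.resp_add f _ w hwM).mpr h2⟩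
  rw [Finset.card_insert_of_notMem hwM]
  omega

lemma blocks_of_swap (I : MTO F W) (μ : W → Option F) (v t : W) (f : F)
    (h1 : I.wlt v (some f) (μ v)) (ht : t ∈ matchedSet μ f) (h2 : I.flt1 f (some v) (some t))
    (h3 : (matchedSet μ f).card ≤ I.cap f) : I.blocks μ v f := by
  have hvM : v ∉ matchedSet μ f := I.notMem_matchedSet_of_wlt h1
  have hvt : v ≠ t := fun h => hvM (h ▸ ht)
  have hvE : v ∉ (matchedSet μ f).erase t := fun h => hvM (Finset.mem_of_mem_erase h)
  have htE : t ∉ (matchedSet μ f).erase t := Finset.notMem_erase t _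
  refine ⟨h1, (matchedSet μ f).erase t, Finset.erase_subset t _, ?_, ?_⟩
  · rw [Finset.card_insert_of_notMem hvE, Finset.card_erase_of_mem ht]
    have : 1 ≤ (matchedSet μ f).card := Finset.card_pos.mpr ⟨t, ht⟩
    omega
  · have h4 := (I.resp_swap f ((matchedSet μ f).erase t) v t hvE htE hvt).mpr h2
    rwa [Finset.insert_erase ht] at h4

@[simp] lemma withCap_wlt (I : MTO F W) (f : F) (b : ℕ) : (I.withCap f b).wlt = I.wlt := rfl
@[simp] lemma withCap_flt1 (I : MTO F W) (f : F) (b : ℕ) : (I.withCap f b).flt1 = I.flt1 := rfl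
@[simp] lemma withCap_flt (I : MTO F W) (f : F) (b : ℕ) : (I.withCap f b).flt = I.flt := rfl
lemma withCap_cap (I : MTO F W) (f : F) (b : ℕ) :
    (I.withCap f b).cap = Function.update I.cap f b := rfl

end MTO

end Helpers
section Transfer
set_option linter.unusedSectionVars false

namespace MTO

variable {F W : Type} [DecidableEq W] [DecidableEq F] [Fintype W]

/-- A `(w, f)` pair with `w` acceptable to `f` and `f` preferred by `w`
blocks any matching in the capacity-`|W|` instance. -/
lemma blocks_bigcap (K : MTO F W) (f : F) (ν : W → Option F) (w : W)
    (h1 : K.wlt w (some f) (ν w)) (h2 : K.flt1 f (some w) none) :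
    (K.withCap f (Fintype.card W)).blocks ν w f := by
  set K₂ := K.withCap f (Fintype.card W) with hK₂
  have hwM : w ∉ matchedSet ν f := K.notMem_matchedSet_of_wlt h1
  have hcap : K₂.cap f = Fintype.card W := Function.update_self f _ K.cap
  have hlt : (matchedSet ν f).card < K₂.cap f := by
    rw [hcap, ← Finset.card_univ]
    exact Finset.card_lt_card (Finset.ssubset_univ_iff.mpr
      (fun h => hwM (h ▸ Finset.mem_univ w)))
  exact K₂.blocks_of_underfull ν w f h1 h2 hlt

/-- Transfer stability from `K'` to `K` where the instances differ only in
firm `f`'s preferences over equally acceptable workers, provided no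
mutually acceptable worker prefers `f` to its match. -/
lemma stable_transfer (K K' : MTO F W) (f : F)
    (hcap : K'.cap = K.cap) (hwlt : K'.wlt = K.wlt)
    (hother1 : ∀ g, g ≠ f → K'.flt1 g = K.flt1 g)
    (hother : ∀ g, g ≠ f → K'.flt g = K.flt g)
    (hacc : ∀ w, K.flt1 f (some w) none ↔ K'.flt1 f (some w) none)
    (σ : W → Option F) (hσ : K'.isStable σ)
    (hstar : ∀ w, K.wlt w (some f) (σ w) → ¬ K'.flt1 f (some w) none) :
    K.isStable σ := by
  obtain ⟨hfeas, hIR, hblk⟩ := hσ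
  refine ⟨by rwa [MTO.isMatching, ← hcap], ⟨fun w g h => by rw [← hwlt]; exact hIR.1 w g h, ?_⟩, ?_⟩
  · intro w g h
    by_cases hg : g = f
    · subst hg
      have h1 : K.flt1 g (some w) none := (hacc w).mpr (K'.flt1_some_none g w (hIR.2 w g h))
      exact K.flt1_asymm g h1
    · rw [← hother1 g hg]
      exact hIR.2 w g h
  · rintro w g ⟨h1, S, hS, hc, hflt⟩
    by_cases hg : g = f
    · subst hg
      have hMacc : ∀ t ∈ matchedSet σ g, K.flt1 g (some t) none := fun t ht =>
        (hacc t).mpr (K'.flt1_some_none g t (hIR.2 t g (mem_matchedSet.mp ht)))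
      have hwM : w ∉ matchedSet σ g := K.notMem_matchedSet_of_wlt h1
      have hw : K.flt1 g (some w) none := K.flt1_of_block_superset g hMacc hwM hS hflt
      exact hstar w h1 ((hacc w).mp hw)
    · refine hblk w g ⟨by rw [hwlt]; exact h1, S, hS, by rwa [hcap], ?_⟩
      rw [hother g hg]
      exact hflt

/-- A matching stable in the capacity-`|W|` instance whose fill at `f` is within
`f`'s true capacity is stable in the original instance. -/
lemma stable_of_bigcap (K : MTO F W) (f : F) (ν : W → Option F)
    (hν : (K.withCap f (Fintype.card W)).isStable ν)
    (hfill : (matchedSet ν f).card ≤ K.cap f) : K.isStable ν := by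
  obtain ⟨hfeas, hIR, hblk⟩ := hν
  refine ⟨?_, hIR, ?_⟩
  · intro g
    by_cases hg : g = f
    · subst hg; exact hfill
    · have h := hfeas g
      rwa [withCap_cap, Function.update_of_ne hg] at h
  · rintro w g ⟨h1, S, hS, hc, hflt⟩
    refine hblk w g ⟨h1, S, hS, ?_, hflt⟩
    rw [withCap_cap]
    by_cases hg : g = f
    · subst hg
      rw [Function.update_self, ← Finset.card_univ]
      exact Finset.card_le_univ _
    · rwa [Function.update_of_ne hg]

end MTO

end Transfer
section Existence
set_option linter.unusedSectionVars false

namespace MTO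

variable {F W : Type} [DecidableEq W] [DecidableEq F] [Fintype W]

lemma exists_stable_bigcap (K : MTO F W) (f : F) (σ : W → Option F) (hσ : K.isStable σ) :
    ∃ ν, (K.withCap f (Fintype.card W)).isStable ν := by
  classical
  set K₂ := K.withCap f (Fintype.card W) with hK₂def
  obtain ⟨hσfeas, hσIR, hσblk⟩ := hσ
  set R : Finset F := insert f (Finset.univ.biUnion (fun w => (σ w).toFinset)) with hR
  set m : (W → Option F) → ℕ :=
    fun π => ∑ v : W, (R.filter (fun g' => K.wlt v (some g') (π v))).card with hm
  suffices h : ∀ (n : ℕ) (π : W → Option F),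
      K₂.isMatching π → K₂.indivRational π →
      (∀ v, π v = σ v ∨ K.wlt v (π v) (σ v)) →
      (∀ v g, K₂.blocks π v g →
        (matchedSet π g).card < K₂.cap g ∧
          ∀ t ∈ matchedSet π g, K.flt1 g (some t) (some v)) →
      m π ≤ n → ∃ ν, K₂.isStable ν by
    refine h (m σ) σ ?_ hσIR (fun v => Or.inl rfl) ?_ le_rfl
    · -- feasibility of σ in K₂
      intro g
      by_cases hg : g = f
      · subst hg
        rw [hK₂def, withCap_cap, Function.update_self, ← Finset.card_univ]
        exact Finset.card_le_univ _
      · rw [hK₂def, withCap_cap, Function.update_of_ne hg]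
        exact hσfeas g
    · -- quasi-stability of σ in K₂
      rintro v e ⟨hv1, S, hS, hc, hflt⟩
      have hvM : v ∉ matchedSet σ e := K.notMem_matchedSet_of_wlt hv1
      by_cases hef : e = f
      · subst hef
        constructor
        · rw [hK₂def, withCap_cap, Function.update_self, ← Finset.card_univ]
          exact Finset.card_lt_card (Finset.ssubset_univ_iff.mpr
            (fun hcon => hvM (hcon ▸ Finset.mem_univ v)))
        · intro t ht
          have hnvt : ¬ K.flt1 e (some v) (some t) := fun hvt =>
            hσblk v e (K.blocks_of_swap σ v t e hv1 ht hvt (hσfeas e))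
          exact K.flt1_total e hnvt (fun hh => hvM (hh ▸ ht))
      · exfalso
        refine hσblk v e ⟨hv1, S, hS, ?_, hflt⟩
        rwa [hK₂def, withCap_cap, Function.update_of_ne hef] at hc
  intro n
  induction n using Nat.strong_induction_on with
  | _ n IH =>
  intro π hfeas hIR hB hC hmn
  by_cases hst : ∀ v g, ¬ K₂.blocks π v g
  · exact ⟨π, hfeas, hIR, hst⟩
  push_neg at hst
  obtain ⟨w₀, g, hblk0⟩ := hst
  have hIRK : K.indivRational π := hIR
  set B : Finset W := Finset.univ.filter (fun v => K₂.blocks π v g) with hBdef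
  have hBne : B.Nonempty := ⟨w₀, Finset.mem_filter.mpr ⟨Finset.mem_univ _, hblk0⟩⟩
  obtain ⟨w, hwB, hwmax⟩ := K.exists_flt1_max g B hBne
  have hwg : K₂.blocks π w g := (Finset.mem_filter.mp hwB).2
  have hwlt : K.wlt w (some g) (π w) := hwg.1
  have hCg := hC w g hwg
  have hwMg : w ∉ matchedSet π g := K.notMem_matchedSet_of_wlt hwlt
  have hacc_w : K.flt1 g (some w) none := by
    obtain ⟨_, S, hS, hc, hflt⟩ := hwg
    exact K.flt1_of_block_superset g (K.matched_acc hIRK g) hwMg hS hflt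
  set π₂ : W → Option F := Function.update π w (some g) with hπ₂
  -- matched sets of π₂
  have hM2g : matchedSet π₂ g = insert w (matchedSet π g) := by
    ext v
    simp only [mem_matchedSet, Finset.mem_insert]
    by_cases hv : v = w
    · rw [hπ₂, hv, Function.update_self]
      simp
    · rw [hπ₂, Function.update_of_ne hv]
      simp [hv]
  have hM2ne : ∀ e, e ≠ g → matchedSet π₂ e = (matchedSet π e).erase w := by
    intro e he
    ext v
    simp only [mem_matchedSet, Finset.mem_erase]
    by_cases hv : v = w
    · rw [hπ₂, hv, Function.update_self]
      have hge : g ≠ e := fun hh => he hh.symm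
      simp [hge]
    · rw [hπ₂, Function.update_of_ne hv]
      simp [hv]
  -- feasibility of π₂
  have hfeas₂ : K₂.isMatching π₂ := by
    intro e
    by_cases he : e = g
    · subst he
      rw [hM2g, Finset.card_insert_of_notMem hwMg]
      have := hCg.1
      omega
    · rw [hM2ne e he]
      exact le_trans (Finset.card_le_card (Finset.erase_subset w _)) (hfeas e)
  -- individual rationality of π₂
  have hwacc2 : ¬ K.wlt w none (some g) := by
    intro hno
    have htr := K.wlt_trans w none (some g) (π w) hno hwlt
    cases hπw : π w with
    | none => rw [hπw] at htr; exact K.wlt_irrefl w none htr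
    | some e => rw [hπw] at htr; exact hIRK.1 w e hπw htr
  have hIR₂ : K.indivRational π₂ := by
    constructor
    · intro v e hv
      by_cases hvw : v = w
      · rw [hπ₂, hvw, Function.update_self] at hv
        cases Option.some_injective _ hv
        rw [hvw]
        exact hwacc2
      · rw [hπ₂, Function.update_of_ne hvw] at hv
        exact hIRK.1 v e hv
    · intro v e hv
      by_cases hvw : v = w
      · rw [hπ₂, hvw, Function.update_self] at hv
        cases Option.some_injective _ hv
        rw [hvw]
        exact K.flt1_asymm g hacc_w
      · rw [hπ₂, Function.update_of_ne hvw] at hv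
        exact hIRK.2 v e hv
  have hIR₂' : K₂.indivRational π₂ := hIR₂
  -- workers weakly improve
  have hB₂ : ∀ v, π₂ v = σ v ∨ K.wlt v (π₂ v) (σ v) := by
    intro v
    by_cases hvw : v = w
    · rw [hπ₂, hvw, Function.update_self]
      right
      rcases hB w with hh | hh
      · rw [← hh]; exact hwlt
      · exact K.wlt_trans w (some g) (π w) (σ w) hwlt hh
    · rw [hπ₂, Function.update_of_ne hvw]
      exact hB v
  -- quasi-stability of π₂
  have hC₂ : ∀ v e, K₂.blocks π₂ v e →
      (matchedSet π₂ e).card < K₂.cap e ∧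
        ∀ t ∈ matchedSet π₂ e, K.flt1 e (some t) (some v) := by
    rintro v e ⟨hv1, S, hS, hc, hflt⟩
    have hvM₂ : v ∉ matchedSet π₂ e := K.notMem_matchedSet_of_wlt hv1
    have hMacc₂ : ∀ t ∈ matchedSet π₂ e, K.flt1 e (some t) none := K.matched_acc hIR₂ e
    have hvacc : K.flt1 e (some v) none := K.flt1_of_block_superset e hMacc₂ hvM₂ hS hflt
    have hv1' : K.wlt v (some e) (π v) := by
      by_cases hvw : v = w
      · rw [hπ₂, hvw, Function.update_self] at hv1
        rw [hvw]
        exact K.wlt_trans w (some e) (some g) (π w) hv1 hwlt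
      · rw [hπ₂, Function.update_of_ne hvw] at hv1
        exact hv1
    by_cases heg : e = g
    · subst heg
      have hwM₂ : w ∈ matchedSet π₂ e := by
        rw [hM2g]; exact Finset.mem_insert_self _ _
      have hvw : v ≠ w := fun hh => hvM₂ (hh ▸ hwM₂)
      have hvblkπ : K₂.blocks π v e := K₂.blocks_of_underfull π v e hv1' hvacc hCg.1
      have hii : ∀ t ∈ matchedSet π₂ e, K.flt1 e (some t) (some v) := by
        intro t ht
        rw [hM2g, Finset.mem_insert] at ht
        rcases ht with rfl | ht
        · rcases hwmax v (Finset.mem_filter.mpr ⟨Finset.mem_univ v, hvblkπ⟩) with rfl | hh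
          · exact absurd rfl hvw
          · exact hh
        · exact (hC v e hvblkπ).2 t ht
      refine ⟨?_, hii⟩
      by_contra hfull
      push_neg at hfull
      have hfull' : (matchedSet π₂ e).card = K₂.cap e := le_antisymm (hfeas₂ e) hfull
      have hcard' : (insert v S).card ≤ (matchedSet π₂ e).card := by rw [hfull']; exact hc
      obtain ⟨t, htM, hvt⟩ := K.exists_flt1_of_block_full e hMacc₂ hvM₂ hS hcard' hflt
      exact K.flt1_asymm e hvt (hii t htM)
    · have hM2e : matchedSet π₂ e = (matchedSet π e).erase w := hM2ne e heg
      by_cases hwe : π w = some e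
      · have hwMe : w ∈ matchedSet π e := mem_matchedSet.mpr hwe
        constructor
        · rw [hM2e, Finset.card_erase_of_mem hwMe]
          have h1 : 1 ≤ (matchedSet π e).card := Finset.card_pos.mpr ⟨w, hwMe⟩
          have h2 := hfeas e
          omega
        · by_cases hef : (matchedSet π e).card < K₂.cap e
          · have hvb : K₂.blocks π v e := K₂.blocks_of_underfull π v e hv1' hvacc hef
            intro t ht
            rw [hM2e] at ht
            exact (hC v e hvb).2 t (Finset.mem_of_mem_erase ht)
          · intro t ht
            rw [hM2e] at ht
            have htMe : t ∈ matchedSet π e := Finset.mem_of_mem_erase ht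
            have htv : v ≠ t := fun hh => hvM₂ (by rw [hM2e]; exact hh ▸ ht)
            have hnvt : ¬ K.flt1 e (some v) (some t) := by
              intro hvt
              have hswap : K₂.blocks π v e :=
                K₂.blocks_of_swap π v t e hv1' htMe hvt (hfeas e)
              exact hef (hC v e hswap).1
            exact K.flt1_total e hnvt htv
      · have hwMe : w ∉ matchedSet π e := fun hh => hwe (mem_matchedSet.mp hh)
        have hM2e' : matchedSet π₂ e = matchedSet π e := by
          rw [hM2e, Finset.erase_eq_of_notMem hwMe]
        have hvb : K₂.blocks π v e :=
          ⟨hv1', S, by rwa [hM2e'] at hS, hc, by rwa [hM2e'] at hflt⟩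
        rw [hM2e']
        exact hC v e hvb
  -- g belongs to the finite relevant set R
  have hgR : g ∈ R := by
    by_cases hgf : g = f
    · rw [hR, hgf]
      exact Finset.mem_insert_self _ _
    · obtain ⟨_, S, hS, hc, hflt⟩ := hwg
      have hcap_g : K₂.cap g = K.cap g := by
        rw [hK₂def, withCap_cap, Function.update_of_ne hgf]
      have hcappos : 1 ≤ K.cap g := by
        have h1 : 1 ≤ (insert w S).card :=
          Finset.card_pos.mpr ⟨w, Finset.mem_insert_self w S⟩
        rw [hcap_g] at hc
        omega
      have hwσ : K.wlt w (some g) (σ w) := by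
        rcases hB w with hh | hh
        · rw [← hh]; exact hwlt
        · exact K.wlt_trans w (some g) (π w) (σ w) hwlt hh
      have hfull : ¬ (matchedSet σ g).card < K.cap g := fun hlt =>
        hσblk w g (K.blocks_of_underfull σ w g hwσ hacc_w hlt)
      have hne : (matchedSet σ g).Nonempty := by
        rw [← Finset.card_pos]
        omega
      obtain ⟨u, hu⟩ := hne
      rw [hR]
      refine Finset.mem_insert_of_mem (Finset.mem_biUnion.mpr ⟨u, Finset.mem_univ u, ?_⟩)
      simp [mem_matchedSet.mp hu]
  -- the measure strictly decreases
  have hdec : m π₂ < m π := by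
    rw [hm]
    refine Finset.sum_lt_sum (fun v _ => ?_) ⟨w, Finset.mem_univ w, ?_⟩
    · by_cases hvw : v = w
      · apply Finset.card_le_card
        intro g' hg'
        obtain ⟨hg'R, hg'w⟩ := Finset.mem_filter.mp hg'
        rw [hπ₂, hvw, Function.update_self] at hg'w
        refine Finset.mem_filter.mpr ⟨hg'R, ?_⟩
        rw [hvw]
        exact K.wlt_trans w (some g') (some g) (π w) hg'w hwlt
      · rw [hπ₂, Function.update_of_ne hvw]
    · apply Finset.card_lt_card
      constructor
      · intro g' hg'
        obtain ⟨hg'R, hg'w⟩ := Finset.mem_filter.mp hg'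
        rw [hπ₂, Function.update_self] at hg'w
        exact Finset.mem_filter.mpr ⟨hg'R, K.wlt_trans w (some g') (some g) (π w) hg'w hwlt⟩
      · intro hcon
        have hgmem := hcon (Finset.mem_filter.mpr ⟨hgR, hwlt⟩)
        have := (Finset.mem_filter.mp hgmem).2
        rw [hπ₂, Function.update_self] at this
        exact K.wlt_irrefl w (some g) this
  have hm2n : m π₂ < n := lt_of_lt_of_le hdec hmn
  exact IH (m π₂) hm2n π₂ hfeas₂ hIR₂' hB₂ hC₂ le_rfl

end MTO

end Existence

/-- At or above peak, a firm cannot change its WPDA outcome by misreporting any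
permutation of its acceptable workers: it is matched to the same set of workers
in the worker-optimal stable matching as under truthful reporting. -/
theorem at_or_above_peak_pref_manipulation_useless_wpda
    {F W : Type} [DecidableEq W] [DecidableEq F] [Fintype W]
    (I I' : MTO F W) (f : F)
    (hcap : I'.cap = I.cap)
    (hwlt : I'.wlt = I.wlt)
    (hother1 : ∀ g, g ≠ f → I'.flt1 g = I.flt1 g)
    (hother : ∀ g, g ≠ f → I'.flt g = I.flt g)
    (hacc : ∀ w, I.flt1 f (some w) none ↔ I'.flt1 f (some w) none)
    (hpeak : I.peak f ≤ I.cap f)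
    (μ μ' : W → Option F)
    (hμ : I.workerOptimal μ) (hμ' : I'.workerOptimal μ') :
    matchedSet μ' f = matchedSet μ f := by
  obtain ⟨hμs, hμopt⟩ := hμ
  obtain ⟨hμ's, hμ'opt⟩ := hμ'
  -- any matching stable in any capacity-variant of I has fill at most the peak
  have hpeak_mem : ∀ (b : ℕ) (ρ : W → Option F), (I.withCap f b).isStable ρ →
      (matchedSet ρ f).card ≤ I.peak f := by
    intro b ρ hρ
    refine le_csSup ⟨Fintype.card W, ?_⟩ ⟨b, ρ, hρ, rfl⟩
    rintro x ⟨b', ρ', h', rfl⟩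
    rw [← Finset.card_univ]
    exact Finset.card_le_univ _
  -- a stable matching of I with capacity |W| at f
  obtain ⟨ν, hν⟩ := MTO.exists_stable_bigcap I f μ hμs
  have hνI : I.isStable ν :=
    I.stable_of_bigcap f ν hν (le_trans (hpeak_mem _ ν hν) hpeak)
  -- no mutually acceptable worker prefers f to its μ-match
  have hstar : ∀ w, I.wlt w (some f) (μ w) → ¬ I.flt1 f (some w) none := by
    intro w hw hfw
    have hwν : I.wlt w (some f) (ν w) := by
      rcases hμopt ν hνI w with h | h
      · rw [h]; exact hw
      · exact I.wlt_trans w (some f) (μ w) (ν w) hw h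
    exact hν.2.2 w f (I.blocks_bigcap f ν w hwν hfw)
  -- μ is stable in I'
  have hμI' : I'.isStable μ :=
    MTO.stable_transfer I' I f hcap.symm hwlt.symm
      (fun g hg => (hother1 g hg).symm) (fun g hg => (hother g hg).symm)
      (fun w => (hacc w).symm) μ hμs
      (fun w hw => hstar w (by rw [hwlt] at hw; exact hw))
  -- a stable matching of I' with capacity |W| at f
  obtain ⟨ν', hν'⟩ := MTO.exists_stable_bigcap I' f μ' hμ's
  -- it is stable in the capacity-|W| variant of I as well
  have hν'J : (I.withCap f (Fintype.card W)).isStable ν' := by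
    refine MTO.stable_transfer (I.withCap f (Fintype.card W)) (I'.withCap f (Fintype.card W)) f
      ?_ ?_ (fun g hg => hother1 g hg) (fun g hg => hother g hg) (fun w => hacc w) ν' hν' ?_
    · rw [MTO.withCap_cap, MTO.withCap_cap, hcap]
    · rw [MTO.withCap_wlt, MTO.withCap_wlt]; exact hwlt
    · intro w hw hfw
      have hw' : I'.wlt w (some f) (ν' w) := by rw [hwlt]; exact hw
      exact hν'.2.2 w f (I'.blocks_bigcap f ν' w hw' hfw)
  have hfill' : (matchedSet ν' f).card ≤ I.cap f := le_trans (hpeak_mem _ ν' hν'J) hpeak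
  have hν'I' : I'.isStable ν' :=
    I'.stable_of_bigcap f ν' hν' (by rw [hcap]; exact hfill')
  -- no mutually acceptable worker prefers f to its μ'-match
  have hstar' : ∀ w, I'.wlt w (some f) (μ' w) → ¬ I'.flt1 f (some w) none := by
    intro w hw hfw
    have hwν : I'.wlt w (some f) (ν' w) := by
      rcases hμ'opt ν' hν'I' w with h | h
      · rw [h]; exact hw
      · exact I'.wlt_trans w (some f) (μ' w) (ν' w) hw h
    exact hν'.2.2 w f (I'.blocks_bigcap f ν' w hwν hfw)
  -- μ' is stable in I
  have hμ'I : I.isStable μ' :=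
    MTO.stable_transfer I I' f hcap hwlt hother1 hother hacc μ' hμ's
      (fun w hw => hstar' w (by rw [hwlt]; exact hw))
  -- both worker-optimal: the matchings agree
  have heq : μ' = μ := by
    funext w
    rcases hμopt μ' hμ'I w with h | h
    · exact h
    · rcases hμ'opt μ hμI' w with h2 | h2
      · exact h2.symm
      · rw [hwlt] at h2
        exact absurd h2 (I.wlt_asymm w h)
  rw [heq]
end
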